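/- arXiv:2604.11305 — 7 statements merged into one kernel-verified Lean document; each statement's English description precedes it below -/
import Mathlib

section
/- Fixed-level FDR control of conformal selection (Theorem 1). Assume the combined calibration and test pairs D_cal ∪ D_test = {(X_i,Y_i)}_{i=1}^{n} ∪ {(X_{n+j},Y_{n+j})}_{j=1}^{m} are i.i.d., and the score function S(X,Y) is monotone non-increasing in Y. Let the thresholds {c_j}_{j=1}^m and the target level α_max ∈ (0,1) be fixed in advance, independently of the data. Then the selection rule that applies the Benjamini–Hochberg procedure at level α_max to the conformal p-variables P_j satisfies FDR(R^{CS}_{α_max}) = E[ FDP(R^{CS}_{α_max}, Y^{test}) ] ≤ α_max. -/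
/-!
STATEMENT 0: Fixed-level FDR control of conformal selection (Theorem 1).

The combined data are the i.i.d. triples `(X i, Y i, U i)`, `i : Fin (n + m)`,
where `(X i, Y i)` are the covariate/response pairs (calibration indices
`Fin.castAdd m i`, test indices `Fin.natAdd n j`) and `U i` is an auxiliary
`U([0,1])` tie-breaking variable, independent of `(X i, Y i)`, implementing the
randomized tie-breaking in the conformal p-variables: a calibration point `i`
is counted as exceeding the test score iff `S_i > Ŝ_{n+j}`, or the scores are
tied and `U_i > U_{n+j}`.  The BH procedure at the pre-specified level `αmax`
is applied to the conformal p-variables and the resulting selection rule has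
FDR at most `αmax`.
-/

open MeasureTheory ProbabilityTheory

/-- non-decreasing sort of the values of `P`. -/
noncomputable def sortedVals (m : ℕ) (P : Fin m → ℝ) : List ℝ :=
  Multiset.sort (Multiset.map P Finset.univ.val) (· ≤ ·)

/-- the `k`-th smallest value, `P_(k)`, for `1 ≤ k ≤ m`. -/
noncomputable def kthSmallest (m : ℕ) (P : Fin m → ℝ) (k : ℕ) : ℝ :=
  (sortedVals m P).getD (k - 1) 0

/-- BH index `k(α) = max {k ∈ {1,…,m} : P_(k) ≤ α k / m}` (`0` if empty). -/
noncomputable def bhIndex (m : ℕ) (α : ℝ) (P : Fin m → ℝ) : ℕ :=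
  sSup {k | 1 ≤ k ∧ k ≤ m ∧ kthSmallest m P k ≤ α * k / m}

/-- BH rejection set `{j : P j ≤ α k(α) / m}` if `k(α) > 0`, else `∅`. -/
noncomputable def bhSet (m : ℕ) (α : ℝ) (P : Fin m → ℝ) : Finset (Fin m) :=
  if bhIndex m α P = 0 then ∅
  else Finset.univ.filter fun j => P j ≤ α * bhIndex m α P / m

/-- conformal p-variable `P_j = (1 + Σ_i 1{S_i > Ŝ_{n+j}}) / (n+1)` with
randomized tie-breaking via the auxiliary uniforms `u`. -/
noncomputable def conformalP {𝓧 : Type*} (n m : ℕ) (S : 𝓧 → ℝ → ℝ)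
    (X : Fin (n + m) → 𝓧) (Y : Fin (n + m) → ℝ) (u : Fin (n + m) → ℝ)
    (c : Fin m → ℝ) (j : Fin m) : ℝ :=
  (1 + ∑ i : Fin n,
      if S (X (Fin.natAdd n j)) (c j) < S (X (Fin.castAdd m i)) (Y (Fin.castAdd m i))
          ∨ (S (X (Fin.castAdd m i)) (Y (Fin.castAdd m i)) = S (X (Fin.natAdd n j)) (c j)
              ∧ u (Fin.natAdd n j) < u (Fin.castAdd m i))
        then (1 : ℝ) else 0) / (n + 1)

/-- false discovery proportion of `R` against the null indices. -/
noncomputable def fdp (m : ℕ) (R : Finset (Fin m)) (null : Fin m → Prop)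
    [DecidablePred null] : ℝ :=
  ((R.filter null).card : ℝ) / max 1 (R.card : ℝ)

-- count of values ≤ x
noncomputable def cntLE (m : ℕ) (P : Fin m → ℝ) (x : ℝ) : ℕ :=
  (Finset.univ.filter (fun l => P l ≤ x)).card

lemma length_sortedVals (m : ℕ) (P : Fin m → ℝ) : (sortedVals m P).length = m := by
  simp [sortedVals]

lemma sorted_sortedVals (m : ℕ) (P : Fin m → ℝ) : (sortedVals m P).Pairwise (· ≤ ·) :=
  Multiset.pairwise_sort _ _

lemma countP_sortedVals (m : ℕ) (P : Fin m → ℝ) (x : ℝ) :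
    (sortedVals m P).countP (fun y => decide (y ≤ x)) = cntLE m P x := by
  have h1 : ((sortedVals m P : List ℝ) : Multiset ℝ) = Multiset.map P Finset.univ.val :=
    Multiset.sort_eq _ _
  have h2 : (sortedVals m P).countP (fun y => decide (y ≤ x))
      = Multiset.countP (fun y => decide (y ≤ x)) (Multiset.map P Finset.univ.val) := by
    rw [← h1, Multiset.coe_countP]
    simp
  rw [h2, Multiset.countP_map]
  rw [cntLE, Finset.card_filter]
  simp [Finset.sum_boole]
  rfl

-- sorted list: k-th smallest ≤ x iff at least k elements ≤ x
lemma sorted_getD_le_iff {L : List ℝ} (hL : L.Pairwise (· ≤ ·)) {k : ℕ} (hk1 : 1 ≤ k)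
    (hk2 : k ≤ L.length) (x : ℝ) :
    L.getD (k - 1) 0 ≤ x ↔ k ≤ L.countP (fun y => decide (y ≤ x)) := by
  have hlt : k - 1 < L.length := by omega
  have hget : L.getD (k - 1) 0 = L.get ⟨k - 1, hlt⟩ := List.getD_eq_getElem L 0 hlt
  have hmono : ∀ (i j : Fin L.length), (i : ℕ) < j → L.get i ≤ L.get j := by
    have := List.pairwise_iff_get.1 hL
    intro i j hij; exact this i j hij
  rw [hget]
  constructor
  · intro h
    have htake : ∀ y ∈ L.take k, y ≤ x := by
      intro y hy
      obtain ⟨i, hi, rfl⟩ := List.mem_take_iff_getElem.1 hy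
      have hik : i < k := lt_of_lt_of_le hi (min_le_left _ _)
      have hi' : i < L.length := lt_of_lt_of_le hik hk2
      have hle : L.get ⟨i, hi'⟩ ≤ L.get ⟨k - 1, hlt⟩ := by
        rcases lt_or_eq_of_le (by omega : i ≤ k - 1) with h' | h'
        · exact hmono ⟨i, hi'⟩ ⟨k - 1, hlt⟩ h'
        · exact le_of_eq (by congr 1; exact Fin.ext h')
      calc L[i] = L.get ⟨i, hi'⟩ := rfl
        _ ≤ L.get ⟨k - 1, hlt⟩ := hle
        _ ≤ x := h
    calc k = (L.take k).length := (List.length_take_of_le hk2).symm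
      _ = (L.take k).countP (fun y => decide (y ≤ x)) := by
          refine ((List.countP_eq_length).2 ?_).symm
          intro a ha; simpa using htake a ha
      _ ≤ L.countP (fun y => decide (y ≤ x)) :=
          List.Sublist.countP_le (List.take_sublist k L)
  · intro h
    by_contra hx
    push_neg at hx
    have hdropzero : L.countP (fun y => decide (y ≤ x)) ≤ k - 1 := by
      have hsplit : L = L.take (k-1) ++ L.drop (k-1) := (List.take_append_drop _ L).symm
      have hdrop : (L.drop (k-1)).countP (fun y => decide (y ≤ x)) = 0 := by
        rw [List.countP_eq_zero]
        intro a ha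
        obtain ⟨i, hi, rfl⟩ := List.mem_iff_getElem.1 ha
        have hbd : k - 1 + i < L.length := by
          have : (L.drop (k-1)).length = L.length - (k-1) := List.length_drop; omega
        have hgd : (L.drop (k-1))[i] = L.get ⟨k - 1 + i, hbd⟩ := by
          simp [List.getElem_drop]
        rw [hgd]
        have hle : L.get ⟨k - 1, hlt⟩ ≤ L.get ⟨k - 1 + i, hbd⟩ := by
          rcases Nat.eq_zero_or_pos i with h0 | h0
          · subst h0
            exact le_of_eq rfl
          · refine hmono _ _ ?_
            simp only [Fin.val_mk]
            omega
        simpa using not_le.2 (lt_of_lt_of_le hx hle)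
      calc L.countP (fun y => decide (y ≤ x))
          = (L.take (k-1)).countP _ + (L.drop (k-1)).countP _ := by
            conv_lhs => rw [hsplit]
            exact List.countP_append
        _ ≤ (L.take (k-1)).length + 0 := by
            rw [hdrop]; exact Nat.add_le_add List.countP_le_length le_rfl
        _ ≤ k - 1 := by simpa using List.length_take_le ..
    omega

lemma kthSmallest_le_iff {m : ℕ} (P : Fin m → ℝ) {k : ℕ} (hk1 : 1 ≤ k) (hk2 : k ≤ m) (x : ℝ) :
    kthSmallest m P k ≤ x ↔ k ≤ cntLE m P x := by
  rw [kthSmallest, sorted_getD_le_iff (sorted_sortedVals m P) hk1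
    (by rw [length_sortedVals]; exact hk2), countP_sortedVals]

lemma cntLE_le (m : ℕ) (P : Fin m → ℝ) (x : ℝ) : cntLE m P x ≤ m :=
  le_trans (Finset.card_filter_le _ _) (by simp)

lemma cntLE_mono_x (m : ℕ) (P : Fin m → ℝ) {x y : ℝ} (h : x ≤ y) :
    cntLE m P x ≤ cntLE m P y := by
  apply Finset.card_le_card
  intro l hl
  simp only [Finset.mem_filter] at *
  exact ⟨hl.1, hl.2.trans h⟩

lemma cntLE_mono_P {m : ℕ} {P Q : Fin m → ℝ} (h : ∀ l, P l ≤ Q l) (x : ℝ) :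
    cntLE m Q x ≤ cntLE m P x := by
  apply Finset.card_le_card
  intro l hl
  simp only [Finset.mem_filter] at *
  exact ⟨hl.1, (h l).trans hl.2⟩

lemma kthSmallest_mono {m : ℕ} {P Q : Fin m → ℝ} (h : ∀ l, P l ≤ Q l) {k : ℕ}
    (hk1 : 1 ≤ k) (hk2 : k ≤ m) : kthSmallest m P k ≤ kthSmallest m Q k := by
  have h1 := (kthSmallest_le_iff Q hk1 hk2 (kthSmallest m Q k)).1 le_rfl
  exact (kthSmallest_le_iff P hk1 hk2 _).2 (h1.trans (cntLE_mono_P h _))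

def Kset (m : ℕ) (α : ℝ) (P : Fin m → ℝ) : Set ℕ :=
  {k | 1 ≤ k ∧ k ≤ m ∧ kthSmallest m P k ≤ α * k / m}

lemma bhIndex_eq_sSup (m : ℕ) (α : ℝ) (P : Fin m → ℝ) :
    bhIndex m α P = sSup (Kset m α P) := rfl

lemma Kset_bdd (m : ℕ) (α : ℝ) (P : Fin m → ℝ) : BddAbove (Kset m α P) :=
  ⟨m, fun _ hk => hk.2.1⟩

lemma bhIndex_mem {m : ℕ} {α : ℝ} {P : Fin m → ℝ} (h : bhIndex m α P ≠ 0) :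
    bhIndex m α P ∈ Kset m α P := by
  rcases Set.eq_empty_or_nonempty (Kset m α P) with he | hne
  · exfalso; apply h; rw [bhIndex_eq_sSup, he]; exact csSup_empty
  · exact Nat.sSup_mem hne (Kset_bdd m α P)

lemma le_bhIndex {m : ℕ} {α : ℝ} {P : Fin m → ℝ} {k : ℕ} (hk : k ∈ Kset m α P) :
    k ≤ bhIndex m α P := le_csSup (Kset_bdd m α P) hk

lemma bhIndex_le_m (m : ℕ) (α : ℝ) (P : Fin m → ℝ) : bhIndex m α P ≤ m := by
  by_cases h : bhIndex m α P = 0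
  · omega
  · exact (bhIndex_mem h).2.1

lemma bhIndex_mono {m : ℕ} {α : ℝ} {P Q : Fin m → ℝ} (h : ∀ l, P l ≤ Q l) :
    bhIndex m α Q ≤ bhIndex m α P := by
  by_cases h0 : bhIndex m α Q = 0
  · omega
  · have hm := bhIndex_mem h0
    exact le_bhIndex ⟨hm.1, hm.2.1, le_trans (kthSmallest_mono h hm.1 hm.2.1) hm.2.2⟩

lemma mem_bhSet {m : ℕ} {α : ℝ} {P : Fin m → ℝ} {j : Fin m} :
    j ∈ bhSet m α P ↔ bhIndex m α P ≠ 0 ∧ P j ≤ α * bhIndex m α P / m := by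
  rw [bhSet]
  split_ifs with h
  · simp [h]
  · simp [h]

lemma card_bhSet {m : ℕ} {α : ℝ} {P : Fin m → ℝ} (hα : 0 ≤ α)
    (h : bhIndex m α P ≠ 0) : (bhSet m α P).card = bhIndex m α P := by
  set k := bhIndex m α P with hk
  obtain ⟨hk1, hkm, hkth⟩ := bhIndex_mem h
  have hm : 0 < m := lt_of_lt_of_le hk1 hkm
  have hcard : (bhSet m α P).card = cntLE m P (α * k / m) := by
    rw [bhSet, if_neg h]; rfl
  have hge : k ≤ cntLE m P (α * k / m) := (kthSmallest_le_iff P hk1 hkm _).1 hkth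
  have hle : cntLE m P (α * k / m) ≤ k := by
    set k' := cntLE m P (α * k / m) with hk'
    have hk'm : k' ≤ m := cntLE_le m P _
    have hthresh : α * k / m ≤ α * k' / m := by
      have h1 : (k:ℝ) ≤ k' := by exact_mod_cast hge
      have h2 := mul_le_mul_of_nonneg_left h1 hα
      have h3 : (0:ℝ) < m := by exact_mod_cast hm
      exact (div_le_div_iff_of_pos_right h3).2 h2
    have : kthSmallest m P k' ≤ α * k' / m := by
      rw [kthSmallest_le_iff P (le_trans hk1 hge) hk'm]
      exact le_trans le_rfl (cntLE_mono_x m P hthresh)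
    exact le_bhIndex ⟨le_trans hk1 hge, hk'm, this⟩
  rw [hcard]; omega

lemma bh_update {m : ℕ} {α : ℝ} {P : Fin m → ℝ} {j : Fin m} {v : ℝ} (hα : 0 ≤ α)
    (hv : v ≤ P j) (hj : j ∈ bhSet m α P) :
    bhIndex m α (Function.update P j v) = bhIndex m α P ∧
      bhSet m α (Function.update P j v) = bhSet m α P := by
  set k := bhIndex m α P with hkdef
  obtain ⟨hne, hPj⟩ := mem_bhSet.1 hj
  obtain ⟨hk1, hkm, hkth⟩ := bhIndex_mem hne
  have hm : 0 < m := lt_of_lt_of_le hk1 hkm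
  set Q := Function.update P j v with hQ
  have hQle : ∀ l, Q l ≤ P l := by
    intro l
    by_cases hl : l = j
    · subst hl; simp [hQ, hv]
    · simp [hQ, Function.update_of_ne hl]
  have hgek : k ≤ bhIndex m α Q := bhIndex_mono hQle
  have hcnt : ∀ x, α * k / m ≤ x → cntLE m Q x = cntLE m P x := by
    intro x hx
    unfold cntLE
    congr 1
    apply Finset.filter_congr
    intro l _
    by_cases hl : l = j
    · subst hl
      simp only [hQ, Function.update_self]
      constructor
      · intro _; exact le_trans hPj hx
      · intro _; exact le_trans (le_trans hv hPj) hx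
    · simp [hQ, Function.update_of_ne hl]
  have hidx : bhIndex m α Q = k := by
    refine le_antisymm ?_ hgek
    have hQne : bhIndex m α Q ≠ 0 := by omega
    refine csSup_le ⟨_, bhIndex_mem hQne⟩ ?_
    intro k' hk'
    by_contra hgt
    push_neg at hgt
    obtain ⟨hk'1, hk'm, hk'th⟩ := hk'
    have hthresh : α * k / m ≤ α * k' / m := by
      have h1 : (k:ℝ) ≤ k' := by exact_mod_cast hgt.le
      have h2 := mul_le_mul_of_nonneg_left h1 hα
      have h3 : (0:ℝ) < m := by exact_mod_cast hm
      exact (div_le_div_iff_of_pos_right h3).2 h2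
    have : kthSmallest m P k' ≤ α * k' / m := by
      rw [kthSmallest_le_iff P hk'1 hk'm]
      rw [← hcnt _ hthresh]
      exact (kthSmallest_le_iff Q hk'1 hk'm _).1 hk'th
    have : k' ≤ k := le_bhIndex ⟨hk'1, hk'm, this⟩
    omega
  refine ⟨hidx, ?_⟩
  have hQne : bhIndex m α Q ≠ 0 := by omega
  ext l
  rw [mem_bhSet, mem_bhSet, hidx]
  by_cases hl : l = j
  · subst hl
    simp only [hQ, Function.update_self]
    constructor
    · intro _; exact ⟨hne, hPj⟩
    · intro _; exact ⟨hne, le_trans hv hPj⟩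
  · simp [hQ, Function.update_of_ne hl, hkdef]

lemma sum_inv_bound {ι : Type*} [DecidableEq ι] (T : Finset ι) (t κ : ι → ℕ) (c : ℝ)
    (hc : 0 ≤ c) (ht1 : ∀ g ∈ T, 1 ≤ t g) (htinj : Set.InjOn t T)
    (hκ1 : ∀ g ∈ T, 1 ≤ κ g)
    (hcond : ∀ g ∈ T, (t g : ℝ) ≤ c * κ g)
    (hanti : ∀ g ∈ T, ∀ g' ∈ T, t g ≤ t g' → κ g' ≤ κ g) :
    ∑ g ∈ T, (1 : ℝ) / κ g ≤ c := by
  rcases T.eq_empty_or_nonempty with rfl | hne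
  · simpa using hc
  obtain ⟨gs, hgs, hmax⟩ := T.exists_max_image t hne
  have hcard : T.card ≤ t gs := by
    have himg : T.image t ⊆ Finset.Icc 1 (t gs) := by
      intro a ha
      obtain ⟨g, hg, rfl⟩ := Finset.mem_image.1 ha
      exact Finset.mem_Icc.2 ⟨ht1 g hg, hmax g hg⟩
    calc T.card = (T.image t).card := (Finset.card_image_of_injOn htinj).symm
      _ ≤ (Finset.Icc 1 (t gs)).card := Finset.card_le_card himg
      _ = t gs := by simp
  have hpos : (0:ℝ) < T.card := by exact_mod_cast hne.card_pos
  have hterm : ∀ g ∈ T, (1:ℝ) / κ g ≤ c / T.card := by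
    intro g hg
    have hκ : κ gs ≤ κ g := hanti g hg gs hgs (hmax g hg)
    have h1 : (T.card : ℝ) ≤ c * κ g := by
      calc (T.card : ℝ) ≤ (t gs : ℝ) := by exact_mod_cast hcard
        _ ≤ c * κ gs := hcond gs hgs
        _ ≤ c * κ g := mul_le_mul_of_nonneg_left (by exact_mod_cast hκ) hc
    have hκpos : (0:ℝ) < κ g := by exact_mod_cast hκ1 g hg
    rw [div_le_div_iff₀ hκpos hpos]
    linarith
  calc ∑ g ∈ T, (1:ℝ) / κ g ≤ ∑ _g ∈ T, c / T.card := Finset.sum_le_sum hterm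
    _ = c := by
      rw [Finset.sum_const, nsmul_eq_mul]
      field_simp


def Beats (a b : ℝ × ℝ) : Prop := b.1 < a.1 ∨ (a.1 = b.1 ∧ b.2 < a.2)

noncomputable instance (a b : ℝ × ℝ) : Decidable (Beats a b) := by unfold Beats; infer_instance

lemma beats_irrefl (a : ℝ × ℝ) : ¬ Beats a a := by
  simp [Beats]

lemma beats_trans {a b c : ℝ × ℝ} (h1 : Beats a b) (h2 : Beats b c) : Beats a c := by
  rcases h1 with h1 | ⟨h1e, h1u⟩ <;> rcases h2 with h2 | ⟨h2e, h2u⟩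
  · exact Or.inl (h2.trans h1)
  · exact Or.inl (lt_of_eq_of_lt h2e.symm h1)
  · exact Or.inl (lt_of_lt_of_eq h2 h1e.symm)
  · exact Or.inr ⟨h1e.trans h2e, h2u.trans h1u⟩

lemma beats_total {a b : ℝ × ℝ} (h : a.2 ≠ b.2) : Beats a b ∨ Beats b a := by
  rcases lt_trichotomy a.1 b.1 with h1 | h1 | h1
  · exact Or.inr (Or.inl h1)
  · rcases lt_or_gt_of_ne h with h2 | h2
    · exact Or.inr (Or.inr ⟨h1.symm, h2⟩)
    · exact Or.inl (Or.inr ⟨h1, h2⟩)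
  · exact Or.inl (Or.inl h1)

lemma beats_snd_le {a b b' : ℝ × ℝ} (hb : b'.1 ≤ b.1) (hb2 : b'.2 = b.2)
    (h : Beats a b) : Beats a b' := by
  rcases h with h | ⟨he, hu⟩
  · exact Or.inl (lt_of_le_of_lt hb h)
  · rcases lt_or_eq_of_le hb with h1 | h1
    · exact Or.inl (lt_of_lt_of_eq h1 he.symm)
    · exact Or.inr ⟨he.trans h1.symm, hb2 ▸ hu⟩

def grp (n m : ℕ) (j : Fin m) : Finset (Fin (n + m)) :=
  Finset.univ.image (Fin.castAdd m) ∪ {Fin.natAdd n j}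

lemma natAdd_not_mem_image (n m : ℕ) (j : Fin m) :
    Fin.natAdd n j ∉ Finset.univ.image (Fin.castAdd (n := n) m) := by
  simp only [Finset.mem_image, not_exists]
  intro i h
  have := congrArg Fin.val h.2
  simp only [Fin.coe_castAdd, Fin.coe_natAdd] at this
  omega

lemma mem_grp_natAdd (n m : ℕ) (j : Fin m) : Fin.natAdd n j ∈ grp n m j := by
  simp [grp]

lemma mem_grp_castAdd (n m : ℕ) (j : Fin m) (i : Fin n) : Fin.castAdd m i ∈ grp n m j := by
  simp [grp]

lemma card_grp (n m : ℕ) (j : Fin m) : (grp n m j).card = n + 1 := by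
  rw [grp, Finset.card_union_of_disjoint (by
    simp only [Finset.disjoint_singleton_right]
    exact natAdd_not_mem_image n m j)]
  rw [Finset.card_image_of_injective _ (Fin.castAdd_injective n m)]
  simp

lemma image_swap_cal (n m : ℕ) (j : Fin m) {g : Fin (n + m)} (hg : g ∈ grp n m j) :
    (Finset.univ.image (Fin.castAdd m)).image (Equiv.swap g (Fin.natAdd n j))
      = (grp n m j).erase g := by
  by_cases hgj : g = Fin.natAdd n j
  · subst hgj
    rw [Equiv.swap_self]
    ext v
    simp only [Finset.mem_image, Equiv.coe_refl, id_eq, Finset.mem_erase, grp,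
      Finset.mem_union, Finset.mem_singleton, exists_eq_right]
    constructor
    · rintro ⟨i, _, rfl⟩
      refine ⟨?_, Or.inl (by simp), ⟩
      intro h
      exact natAdd_not_mem_image n m j (h ▸ Finset.mem_image_of_mem _ (Finset.mem_univ i))
    · rintro ⟨hne, h | h⟩
      · simpa using h
      · exact absurd h hne
  · have hgcal : g ∈ Finset.univ.image (Fin.castAdd (n := n) m) := by
      rcases Finset.mem_union.1 hg with h | h
      · exact h
      · exact absurd (Finset.mem_singleton.1 h) hgj
    ext v
    constructor
    · intro hv
      obtain ⟨u, hu, rfl⟩ := Finset.mem_image.1 hv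
      by_cases hug : u = g
      · subst hug
        rw [Equiv.swap_apply_left]
        exact Finset.mem_erase.2 ⟨Ne.symm hgj, mem_grp_natAdd n m j⟩
      · have hunj : u ≠ Fin.natAdd n j := by
          rintro rfl; exact natAdd_not_mem_image n m j hu
        rw [Equiv.swap_apply_of_ne_of_ne hug hunj]
        exact Finset.mem_erase.2 ⟨hug, Finset.mem_union_left _ hu⟩
    · intro hv
      obtain ⟨hvg, hvG⟩ := Finset.mem_erase.1 hv
      by_cases hvnj : v = Fin.natAdd n j
      · subst hvnj
        exact Finset.mem_image.2 ⟨g, hgcal, Equiv.swap_apply_left g _⟩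
      · have hvcal : v ∈ Finset.univ.image (Fin.castAdd (n := n) m) := by
          rcases Finset.mem_union.1 hvG with h | h
          · exact h
          · exact absurd (Finset.mem_singleton.1 h) hvnj
        exact Finset.mem_image.2 ⟨v, hvcal, Equiv.swap_apply_of_ne_of_ne hvg hvnj⟩

section Det

variable {𝓧 : Type*}

/-- the (score, tie-break) key of a data point -/
noncomputable def keyF (S : 𝓧 → ℝ → ℝ) (e : 𝓧 × ℝ × ℝ) : ℝ × ℝ := (S e.1 e.2.1, e.2.2)

/-- number of group members beating `b` -/
noncomputable def cntG (n m : ℕ) (S : 𝓧 → ℝ → ℝ) (j : Fin m)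
    (w : Fin (n + m) → 𝓧 × ℝ × ℝ) (b : ℝ × ℝ) : ℕ :=
  ((grp n m j).filter (fun v => Beats (keyF S (w v)) b)).card

/-- rank of group member `g` -/
noncomputable def rnk (n m : ℕ) (S : 𝓧 → ℝ → ℝ) (j : Fin m)
    (w : Fin (n + m) → 𝓧 × ℝ × ℝ) (g : Fin (n + m)) : ℕ :=
  1 + cntG n m S j w (keyF S (w g))

noncomputable def PvecF (n m : ℕ) (S : 𝓧 → ℝ → ℝ) (c : Fin m → ℝ)
    (w : Fin (n + m) → 𝓧 × ℝ × ℝ) : Fin m → ℝ :=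
  conformalP n m S (fun i => (w i).1) (fun i => (w i).2.1) (fun i => (w i).2.2) c

noncomputable def ptil (n m : ℕ) (S : 𝓧 → ℝ → ℝ) (j : Fin m)
    (w : Fin (n + m) → 𝓧 × ℝ × ℝ) : ℝ :=
  (1 + ∑ i : Fin n,
      if Beats (keyF S (w (Fin.castAdd m i))) (keyF S (w (Fin.natAdd n j))) then (1:ℝ) else 0)
    / (n + 1)

noncomputable def qvecF (n m : ℕ) (S : 𝓧 → ℝ → ℝ) (c : Fin m → ℝ) (j : Fin m)
    (w : Fin (n + m) → 𝓧 × ℝ × ℝ) : Fin m → ℝ :=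
  Function.update (PvecF n m S c w) j (ptil n m S j w)

noncomputable def FjF (n m : ℕ) (S : 𝓧 → ℝ → ℝ) (c : Fin m → ℝ) (α : ℝ) (j : Fin m)
    (w : Fin (n + m) → 𝓧 × ℝ × ℝ) : ℝ :=
  if j ∈ bhSet m α (qvecF n m S c j w) then ((bhIndex m α (qvecF n m S c j w) : ℝ))⁻¹ else 0

/-- the conformal p-value written via `Beats`/`keyF`. -/
lemma PvecF_eq (n m : ℕ) (S : 𝓧 → ℝ → ℝ) (c : Fin m → ℝ)
    (w : Fin (n + m) → 𝓧 × ℝ × ℝ) (l : Fin m) :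
    PvecF n m S c w l
      = (1 + ∑ i : Fin n,
          if Beats (keyF S (w (Fin.castAdd m i)))
              (S (w (Fin.natAdd n l)).1 (c l), (w (Fin.natAdd n l)).2.2) then (1:ℝ) else 0)
        / (n + 1) := by
  simp only [PvecF, conformalP, Beats, keyF]
  rfl

/-- sum over calibration points of the swapped configuration, as a group count. -/
lemma swap_sum (n m : ℕ) (S : 𝓧 → ℝ → ℝ) (j : Fin m) (w : Fin (n + m) → 𝓧 × ℝ × ℝ)
    {g : Fin (n + m)} (hg : g ∈ grp n m j) (b : ℝ × ℝ) :
    (∑ i : Fin n,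
        if Beats (keyF S ((w ∘ (Equiv.swap g (Fin.natAdd n j))) (Fin.castAdd m i))) b
          then (1:ℝ) else 0)
      = (cntG n m S j w b : ℝ) - (if Beats (keyF S (w g)) b then (1:ℝ) else 0) := by
  classical
  have h1 : (∑ i : Fin n,
        if Beats (keyF S (w (Equiv.swap g (Fin.natAdd n j) (Fin.castAdd m i)))) b
          then (1:ℝ) else 0)
      = ∑ v ∈ Finset.univ.image (Fin.castAdd m),
          (if Beats (keyF S (w (Equiv.swap g (Fin.natAdd n j) v))) b then (1:ℝ) else 0) := by
    rw [Finset.sum_image (fun x _ y _ h => Fin.castAdd_injective n m h)]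
  have h2 : ∑ v ∈ Finset.univ.image (Fin.castAdd m),
          (if Beats (keyF S (w (Equiv.swap g (Fin.natAdd n j) v))) b then (1:ℝ) else 0)
      = ∑ v ∈ (Finset.univ.image (Fin.castAdd m)).image (Equiv.swap g (Fin.natAdd n j)),
          (if Beats (keyF S (w v)) b then (1:ℝ) else 0) := by
    rw [Finset.sum_image (fun x _ y _ h => (Equiv.swap g (Fin.natAdd n j)).injective h)]
  have h3 : ∑ v ∈ (grp n m j).erase g, (if Beats (keyF S (w v)) b then (1:ℝ) else 0)
      = (∑ v ∈ grp n m j, if Beats (keyF S (w v)) b then (1:ℝ) else 0)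
        - (if Beats (keyF S (w g)) b then (1:ℝ) else 0) :=
    Finset.sum_erase_eq_sub hg
  have h4 : (∑ v ∈ grp n m j, if Beats (keyF S (w v)) b then (1:ℝ) else 0)
      = (cntG n m S j w b : ℝ) := by
    rw [cntG, Finset.card_filter]
    push_cast
    rfl
  calc _ = _ := h1
    _ = _ := h2
    _ = _ := by rw [image_swap_cal n m j hg]
    _ = _ := h3.trans (by rw [h4])

/-- hypothesized key of test point `l` -/
noncomputable def hbF (n m : ℕ) (S : 𝓧 → ℝ → ℝ) (c : Fin m → ℝ)
    (w : Fin (n + m) → 𝓧 × ℝ × ℝ) (l : Fin m) : ℝ × ℝ :=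
  (S (w (Fin.natAdd n l)).1 (c l), (w (Fin.natAdd n l)).2.2)

lemma natAdd_ne_of_mem_grp {n m : ℕ} {j l : Fin m} {g : Fin (n + m)}
    (hg : g ∈ grp n m j) (hl : l ≠ j) : Fin.natAdd n l ≠ g := by
  rcases Finset.mem_union.1 hg with h | h
  · obtain ⟨i, _, rfl⟩ := Finset.mem_image.1 h
    intro hcon
    have := congrArg Fin.val hcon
    simp only [Fin.coe_castAdd, Fin.coe_natAdd] at this
    omega
  · rw [Finset.mem_singleton.1 h]
    intro hcon
    have := congrArg Fin.val hcon
    simp only [Fin.coe_natAdd] at this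
    exact hl (Fin.ext (by omega))

lemma qvec_swap_j (n m : ℕ) (S : 𝓧 → ℝ → ℝ) (c : Fin m → ℝ) (j : Fin m)
    (w : Fin (n + m) → 𝓧 × ℝ × ℝ) {g : Fin (n + m)} (hg : g ∈ grp n m j) :
    qvecF n m S c j (w ∘ (Equiv.swap g (Fin.natAdd n j))) j
      = (rnk n m S j w g : ℝ) / (n + 1) := by
  rw [qvecF, Function.update_self, ptil]
  have hswap : (w ∘ (Equiv.swap g (Fin.natAdd n j))) (Fin.natAdd n j) = w g := by
    simp [Equiv.swap_apply_right]
  rw [hswap]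
  have := swap_sum n m S j w hg (keyF S (w g))
  rw [this, if_neg (beats_irrefl _), rnk]
  push_cast
  ring

lemma qvec_swap_l (n m : ℕ) (S : 𝓧 → ℝ → ℝ) (c : Fin m → ℝ) (j : Fin m)
    (w : Fin (n + m) → 𝓧 × ℝ × ℝ) {g : Fin (n + m)} (hg : g ∈ grp n m j)
    {l : Fin m} (hl : l ≠ j) :
    qvecF n m S c j (w ∘ (Equiv.swap g (Fin.natAdd n j))) l
      = (1 + (cntG n m S j w (hbF n m S c w l) : ℝ)
          - (if Beats (keyF S (w g)) (hbF n m S c w l) then (1:ℝ) else 0)) / (n + 1) := by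
  rw [qvecF, Function.update_of_ne hl, PvecF_eq]
  have hfix : (w ∘ (Equiv.swap g (Fin.natAdd n j))) (Fin.natAdd n l) = w (Fin.natAdd n l) := by
    have h1 : Fin.natAdd n l ≠ g := natAdd_ne_of_mem_grp hg hl
    have h2 : Fin.natAdd n l ≠ Fin.natAdd n j := by
      intro hcon
      have := congrArg Fin.val hcon
      simp only [Fin.coe_natAdd] at this
      exact hl (Fin.ext (by omega))
    simp only [Function.comp_apply, Equiv.swap_apply_of_ne_of_ne h1 h2]
  rw [hfix]
  rw [show (S (w (Fin.natAdd n l)).1 (c l), (w (Fin.natAdd n l)).2.2) = hbF n m S c w l from rfl]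
  rw [swap_sum n m S j w hg (hbF n m S c w l)]
  ring

lemma rnk_lt_of_beats (n m : ℕ) (S : 𝓧 → ℝ → ℝ) (j : Fin m)
    (w : Fin (n + m) → 𝓧 × ℝ × ℝ) {g g' : Fin (n + m)} (hg' : g ∈ grp n m j)
    (hb : Beats (keyF S (w g)) (keyF S (w g'))) :
    rnk n m S j w g < rnk n m S j w g' := by
  rw [rnk, rnk]
  have hss : (grp n m j).filter (fun v => Beats (keyF S (w v)) (keyF S (w g)))
      ⊂ (grp n m j).filter (fun v => Beats (keyF S (w v)) (keyF S (w g'))) := by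
    constructor
    · intro v hv
      rw [Finset.mem_filter] at *
      exact ⟨hv.1, beats_trans hv.2 hb⟩
    · intro hsub
      have hgin : g ∈ (grp n m j).filter (fun v => Beats (keyF S (w v)) (keyF S (w g'))) :=
        Finset.mem_filter.2 ⟨hg', hb⟩
      have := hsub hgin
      rw [Finset.mem_filter] at this
      exact beats_irrefl _ this.2
  have := Finset.card_lt_card hss
  unfold cntG
  omega

lemma beats_of_rnk_le (n m : ℕ) (S : 𝓧 → ℝ → ℝ) (j : Fin m)
    (w : Fin (n + m) → 𝓧 × ℝ × ℝ) {g g' : Fin (n + m)} (hg : g ∈ grp n m j)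
    (hg' : g' ∈ grp n m j) (hne : g ≠ g')
    (hu : (w g).2.2 ≠ (w g').2.2)
    (hle : rnk n m S j w g ≤ rnk n m S j w g') :
    Beats (keyF S (w g)) (keyF S (w g')) := by
  rcases beats_total (a := keyF S (w g)) (b := keyF S (w g')) hu with h | h
  · exact h
  · exact absurd (rnk_lt_of_beats n m S j w hg' h) (by omega)

lemma rnk_injOn (n m : ℕ) (S : 𝓧 → ℝ → ℝ) (j : Fin m)
    (w : Fin (n + m) → 𝓧 × ℝ × ℝ)
    (hu : ∀ v v' : Fin (n + m), v ≠ v' → (w v).2.2 ≠ (w v').2.2) :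
    Set.InjOn (rnk n m S j w) (grp n m j) := by
  intro g hg g' hg' heq
  by_contra hne
  rcases beats_total (a := keyF S (w g)) (b := keyF S (w g')) (hu _ _ hne) with h | h
  · exact absurd (rnk_lt_of_beats n m S j w hg h) (by omega)
  · exact absurd (rnk_lt_of_beats n m S j w hg' h) (by omega)

lemma qvec_mono (n m : ℕ) (S : 𝓧 → ℝ → ℝ) (c : Fin m → ℝ) (j : Fin m)
    (w : Fin (n + m) → 𝓧 × ℝ × ℝ) {g g' : Fin (n + m)} (hg : g ∈ grp n m j)
    (hg' : g' ∈ grp n m j) (hb : Beats (keyF S (w g)) (keyF S (w g'))) (l : Fin m) :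
    qvecF n m S c j (w ∘ (Equiv.swap g (Fin.natAdd n j))) l
      ≤ qvecF n m S c j (w ∘ (Equiv.swap g' (Fin.natAdd n j))) l := by
  have hden : (0:ℝ) < n + 1 := by positivity
  by_cases hl : l = j
  · subst hl
    rw [qvec_swap_j n m S c l w hg, qvec_swap_j n m S c l w hg']
    have h := rnk_lt_of_beats n m S l w hg hb
    exact (div_le_div_iff_of_pos_right hden).2 (by exact_mod_cast h.le)
  · rw [qvec_swap_l n m S c j w hg hl, qvec_swap_l n m S c j w hg' hl]
    have hχ : (if Beats (keyF S (w g')) (hbF n m S c w l) then (1:ℝ) else 0)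
        ≤ (if Beats (keyF S (w g)) (hbF n m S c w l) then (1:ℝ) else 0) := by
      by_cases h : Beats (keyF S (w g')) (hbF n m S c w l)
      · rw [if_pos h, if_pos (beats_trans hb h)]
      · rw [if_neg h]
        split_ifs <;> norm_num
    exact (div_le_div_iff_of_pos_right hden).2 (by linarith)

lemma core_swap_bound (n m : ℕ) (S : 𝓧 → ℝ → ℝ) (c : Fin m → ℝ) (α : ℝ) (j : Fin m)
    (w : Fin (n + m) → 𝓧 × ℝ × ℝ) (hα : 0 ≤ α) (hm : 0 < m)
    (hu : ∀ v v' : Fin (n + m), v ≠ v' → (w v).2.2 ≠ (w v').2.2) :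
    ∑ g ∈ grp n m j, FjF n m S c α j (w ∘ (Equiv.swap g (Fin.natAdd n j)))
      ≤ α * (n + 1) / m := by
  classical
  set κ : Fin (n + m) → ℕ :=
    fun g => bhIndex m α (qvecF n m S c j (w ∘ (Equiv.swap g (Fin.natAdd n j)))) with hκ
  set T : Finset (Fin (n + m)) :=
    (grp n m j).filter
      (fun g => j ∈ bhSet m α (qvecF n m S c j (w ∘ (Equiv.swap g (Fin.natAdd n j))))) with hT
  have hsum : ∑ g ∈ grp n m j, FjF n m S c α j (w ∘ (Equiv.swap g (Fin.natAdd n j)))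
      = ∑ g ∈ T, (1:ℝ) / κ g := by
    rw [hT, Finset.sum_filter]
    apply Finset.sum_congr rfl
    intro g _
    rw [FjF]
    split_ifs with h
    · rw [one_div]
    · rfl
  rw [hsum]
  have hTmem : ∀ g ∈ T, g ∈ grp n m j ∧
      j ∈ bhSet m α (qvecF n m S c j (w ∘ (Equiv.swap g (Fin.natAdd n j)))) := by
    intro g hgT; exact Finset.mem_filter.1 hgT
  apply sum_inv_bound T (rnk n m S j w) κ (α * (n + 1) / m) (by positivity)
  · intro g _; rw [rnk]; omega
  · exact Set.InjOn.mono (fun g hgT => by exact_mod_cast (hTmem g hgT).1)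
      (rnk_injOn n m S j w hu)
  · intro g hgT
    have := (mem_bhSet.1 (hTmem g hgT).2).1
    simp only [hκ]
    omega
  · intro g hgT
    obtain ⟨hgG, hmem⟩ := hTmem g hgT
    obtain ⟨hne, hle⟩ := mem_bhSet.1 hmem
    rw [qvec_swap_j n m S c j w hgG] at hle
    have hden : (0:ℝ) < n + 1 := by positivity
    have hmr : (0:ℝ) < m := by exact_mod_cast hm
    rw [div_le_div_iff₀ hden hmr] at hle
    simp only [hκ]
    rw [div_mul_eq_mul_div, le_div_iff₀ hmr]
    calc (rnk n m S j w g : ℝ) * m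
        ≤ α * (bhIndex m α (qvecF n m S c j (w ∘ (Equiv.swap g (Fin.natAdd n j)))) : ℝ)
          * (n+1) := hle
      _ = α * (n+1) * (bhIndex m α (qvecF n m S c j (w ∘ (Equiv.swap g (Fin.natAdd n j)))) : ℝ)
          := by ring
  · intro g hgT g' hgT' hrle
    obtain ⟨hgG, _⟩ := hTmem g hgT
    obtain ⟨hgG', _⟩ := hTmem g' hgT'
    by_cases hne : g = g'
    · subst hne; exact le_rfl
    · have hb := beats_of_rnk_le n m S j w hgG hgG' hne (hu _ _ hne) hrle
      simp only [hκ]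
      exact bhIndex_mono (qvec_mono n m S c j w hgG hgG' hb)

lemma ptil_le_Pj (n m : ℕ) (S : 𝓧 → ℝ → ℝ) (c : Fin m → ℝ) (j : Fin m)
    (w : Fin (n + m) → 𝓧 × ℝ × ℝ)
    (hmono : ∀ x y y', y ≤ y' → S x y' ≤ S x y)
    (hnull : (w (Fin.natAdd n j)).2.1 ≤ c j) :
    ptil n m S j w ≤ PvecF n m S c w j := by
  rw [ptil, PvecF_eq]
  have hden : (0:ℝ) < n + 1 := by positivity
  apply (div_le_div_iff_of_pos_right hden).2
  apply add_le_add_right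
  apply Finset.sum_le_sum
  intro i _
  by_cases h : Beats (keyF S (w (Fin.castAdd m i))) (keyF S (w (Fin.natAdd n j)))
  · rw [if_pos h, if_pos]
    exact beats_snd_le (b := keyF S (w (Fin.natAdd n j)))
      (hmono (w (Fin.natAdd n j)).1 (w (Fin.natAdd n j)).2.1 (c j) hnull) rfl h
  · rw [if_neg h]
    split_ifs <;> norm_num

lemma term_le_FjF (n m : ℕ) (S : 𝓧 → ℝ → ℝ) (c : Fin m → ℝ) (α : ℝ) (j : Fin m)
    (w : Fin (n + m) → 𝓧 × ℝ × ℝ) (hα : 0 ≤ α)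
    (hmono : ∀ x y y', y ≤ y' → S x y' ≤ S x y) :
    (if ((w (Fin.natAdd n j)).2.1 ≤ c j ∧ j ∈ bhSet m α (PvecF n m S c w))
      then (max 1 ((bhSet m α (PvecF n m S c w)).card : ℝ))⁻¹ else 0)
      ≤ FjF n m S c α j w := by
  split_ifs with h
  · obtain ⟨hnull, hjR⟩ := h
    have hv : ptil n m S j w ≤ PvecF n m S c w j := ptil_le_Pj n m S c j w hmono hnull
    obtain ⟨hidx, hset⟩ := bh_update hα hv hjR
    have hne : bhIndex m α (PvecF n m S c w) ≠ 0 := (mem_bhSet.1 hjR).1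
    have hcard : (bhSet m α (PvecF n m S c w)).card = bhIndex m α (PvecF n m S c w) :=
      card_bhSet hα hne
    rw [FjF]
    have hq : qvecF n m S c j w = Function.update (PvecF n m S c w) j (ptil n m S j w) := rfl
    rw [if_pos (by rw [hq, hset]; exact hjR)]
    rw [hq, hidx, hcard]
    have h1 : (1:ℝ) ≤ (bhIndex m α (PvecF n m S c w) : ℝ) := by
      have : 1 ≤ bhIndex m α (PvecF n m S c w) := by omega
      exact_mod_cast this
    rw [max_eq_right h1]
  · rw [FjF]
    split_ifs
    · positivity
    · exact le_rfl

lemma fdp_eq_sum (m : ℕ) (R : Finset (Fin m)) (null : Fin m → Prop) [DecidablePred null] :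
    fdp m R null
      = ∑ j : Fin m, if (null j ∧ j ∈ R) then (max 1 (R.card : ℝ))⁻¹ else 0 := by
  classical
  rw [fdp]
  have hfil : R.filter null = Finset.univ.filter (fun j => null j ∧ j ∈ R) := by
    ext j; simp [and_comm]
  rw [hfil]
  rw [Finset.card_filter]
  push_cast
  rw [Finset.sum_div]
  apply Finset.sum_congr rfl
  intro j _
  split_ifs with h
  · rw [one_div]
  · rw [zero_div]

/-- pointwise FDP bound by the sum of the leave-one-out quantities. -/
lemma fdp_le_sum_FjF (n m : ℕ) (S : 𝓧 → ℝ → ℝ) (c : Fin m → ℝ) (α : ℝ)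
    (w : Fin (n + m) → 𝓧 × ℝ × ℝ) (hα : 0 ≤ α)
    (hmono : ∀ x y y', y ≤ y' → S x y' ≤ S x y)
    [DecidablePred (fun j : Fin m => (w (Fin.natAdd n j)).2.1 ≤ c j)] :
    fdp m (bhSet m α (PvecF n m S c w)) (fun j => (w (Fin.natAdd n j)).2.1 ≤ c j)
      ≤ ∑ j : Fin m, FjF n m S c α j w := by
  rw [fdp_eq_sum]
  apply Finset.sum_le_sum
  intro j _
  exact le_trans (le_of_eq (by congr)) (term_le_FjF n m S c α j w hα hmono)

end Det

section Meas

lemma meas_cntLE (m : ℕ) (x : ℝ) : Measurable fun v : Fin m → ℝ => cntLE m v x := by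
  have : (fun v : Fin m → ℝ => cntLE m v x)
      = fun v => ∑ l : Fin m, if v l ≤ x then 1 else 0 := by
    funext v
    rw [cntLE, Finset.card_filter]
  rw [this]
  apply Finset.measurable_sum
  intro l _
  apply Measurable.ite _ measurable_const measurable_const
  exact measurableSet_le (measurable_pi_apply l) measurable_const

lemma meas_kth (m : ℕ) (k : ℕ) (x : ℝ) (hk1 : 1 ≤ k) (hk2 : k ≤ m) :
    MeasurableSet {v : Fin m → ℝ | kthSmallest m v k ≤ x} := by
  have : {v : Fin m → ℝ | kthSmallest m v k ≤ x} = {v | k ≤ cntLE m v x} := by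
    ext v; exact kthSmallest_le_iff v hk1 hk2 x
  rw [this]
  exact measurableSet_le measurable_const (meas_cntLE m x)

lemma meas_bhIndex (m : ℕ) (α : ℝ) : Measurable fun v : Fin m → ℝ => bhIndex m α v := by
  apply measurable_to_countable'
  intro k
  by_cases hk : k = 0
  · subst hk
    have h0 : (fun v : Fin m → ℝ => bhIndex m α v) ⁻¹' {0}
        = ⋂ (k' : ℕ) (_ : 1 ≤ k') (_ : k' ≤ m), {v | ¬ kthSmallest m v k' ≤ α * k' / m} := by
      ext v
      simp only [Set.mem_preimage, Set.mem_singleton_iff, Set.mem_iInter, Set.mem_setOf_eq]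
      constructor
      · intro h0 k' h1 h2 hle
        have : k' ≤ bhIndex m α v := le_bhIndex ⟨h1, h2, hle⟩
        omega
      · intro hall
        by_contra hne
        obtain ⟨h1, h2, h3⟩ := bhIndex_mem hne
        exact hall _ h1 h2 h3
    rw [h0]
    refine MeasurableSet.iInter fun k' => MeasurableSet.iInter fun h1 =>
      MeasurableSet.iInter fun h2 => (meas_kth m k' _ h1 h2).compl
  · have h0 : (fun v : Fin m → ℝ => bhIndex m α v) ⁻¹' {k}
        = ({v | 1 ≤ k ∧ k ≤ m ∧ kthSmallest m v k ≤ α * k / m}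
            ∩ ⋂ (k' : ℕ) (_ : k < k') (_ : k' ≤ m),
                {v | ¬ kthSmallest m v k' ≤ α * k' / m}) := by
      ext v
      simp only [Set.mem_preimage, Set.mem_singleton_iff, Set.mem_inter_iff, Set.mem_iInter,
        Set.mem_setOf_eq]
      constructor
      · intro heq
        refine ⟨heq ▸ bhIndex_mem (heq ▸ hk), ?_⟩
        intro k' hgt h2 hle
        have : k' ≤ bhIndex m α v := le_bhIndex ⟨by omega, h2, hle⟩
        omega
      · rintro ⟨hmem, hmax⟩
        have hle : k ≤ bhIndex m α v := le_bhIndex hmem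
        have hne : bhIndex m α v ≠ 0 := by omega
        obtain ⟨h1, h2, h3⟩ := bhIndex_mem hne
        by_contra hK
        exact hmax _ (by omega) h2 h3
    rw [h0]
    apply MeasurableSet.inter
    · by_cases hkm : 1 ≤ k ∧ k ≤ m
      · have : {v : Fin m → ℝ | 1 ≤ k ∧ k ≤ m ∧ kthSmallest m v k ≤ α * k / m}
            = {v | kthSmallest m v k ≤ α * k / m} := by
          ext v; simp [hkm.1, hkm.2]
        rw [this]
        exact meas_kth m k _ hkm.1 hkm.2
      · have : {v : Fin m → ℝ | 1 ≤ k ∧ k ≤ m ∧ kthSmallest m v k ≤ α * k / m} = ∅ := by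
          ext v
          simp only [Set.mem_setOf_eq, Set.mem_empty_iff_false, iff_false]
          intro hcon
          exact hkm ⟨hcon.1, hcon.2.1⟩
        rw [this]
        exact MeasurableSet.empty
    · refine MeasurableSet.iInter fun k' => MeasurableSet.iInter fun h1 =>
        MeasurableSet.iInter fun h2 => (meas_kth m k' _ (by omega) h2).compl

lemma meas_mem_bhSet (m : ℕ) (α : ℝ) (j : Fin m) :
    MeasurableSet {v : Fin m → ℝ | j ∈ bhSet m α v} := by
  have h0 : {v : Fin m → ℝ | j ∈ bhSet m α v}
      = ⋃ (k : ℕ) (_ : 1 ≤ k),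
          ({v | bhIndex m α v = k} ∩ {v | v j ≤ α * k / m}) := by
    ext v
    simp only [Set.mem_setOf_eq, Set.mem_iUnion, Set.mem_inter_iff]
    rw [mem_bhSet]
    constructor
    · rintro ⟨hne, hle⟩
      exact ⟨bhIndex m α v, by omega, rfl, hle⟩
    · rintro ⟨k, h1, rfl, hle⟩
      exact ⟨by omega, hle⟩
  rw [h0]
  refine MeasurableSet.iUnion fun k => MeasurableSet.iUnion fun h1 => MeasurableSet.inter ?_ ?_
  · exact meas_bhIndex m α (measurableSet_singleton k)
  · exact measurableSet_le (measurable_pi_apply j) measurable_const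

lemma meas_card_bhSet (m : ℕ) (α : ℝ) :
    Measurable fun v : Fin m → ℝ => ((bhSet m α v).card : ℝ) := by
  classical
  have : (fun v : Fin m → ℝ => ((bhSet m α v).card : ℝ))
      = fun v => ∑ j : Fin m, if j ∈ bhSet m α v then (1:ℝ) else 0 := by
    funext v
    rw [Finset.card_eq_sum_ones]
    push_cast
    rw [Finset.sum_ite_mem]
    simp [Finset.inter_comm]
  rw [this]
  exact Finset.measurable_sum _ fun j _ =>
    Measurable.ite (meas_mem_bhSet m α j) measurable_const measurable_const

end Meas

section MeasPi

variable {𝓧 : Type*} [MeasurableSpace 𝓧]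

lemma meas_keyF {β : Type*} [MeasurableSpace β] {S : 𝓧 → ℝ → ℝ}
    (hS : Measurable fun p : 𝓧 × ℝ => S p.1 p.2) {f : β → 𝓧 × ℝ × ℝ} (hf : Measurable f) :
    Measurable fun b => keyF S (f b) := by
  unfold keyF
  apply Measurable.prodMk
  · exact hS.comp ((hf.fst).prodMk (hf.snd.fst))
  · exact hf.snd.snd

lemma measSet_beats {β : Type*} [MeasurableSpace β] {f g : β → ℝ × ℝ}
    (hf : Measurable f) (hg : Measurable g) :
    MeasurableSet {b | Beats (f b) (g b)} := by
  unfold Beats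
  apply MeasurableSet.union
  · exact measurableSet_lt hg.fst hf.fst
  · exact (measurableSet_eq_fun hf.fst hg.fst).inter (measurableSet_lt hg.snd hf.snd)

variable (n m : ℕ) {S : 𝓧 → ℝ → ℝ} (hS : Measurable fun p : 𝓧 × ℝ => S p.1 p.2)
  (c : Fin m → ℝ) (α : ℝ)

lemma meas_coord (v : Fin (n + m)) :
    Measurable fun w : Fin (n + m) → 𝓧 × ℝ × ℝ => w v := measurable_pi_apply v

include hS

lemma meas_PvecF : Measurable fun w : Fin (n + m) → 𝓧 × ℝ × ℝ => PvecF n m S c w := by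
  apply measurable_pi_lambda
  intro l
  have : (fun w : Fin (n + m) → 𝓧 × ℝ × ℝ => PvecF n m S c w l)
      = fun w => (1 + ∑ i : Fin n,
          if Beats (keyF S (w (Fin.castAdd m i)))
              (S (w (Fin.natAdd n l)).1 (c l), (w (Fin.natAdd n l)).2.2) then (1:ℝ) else 0)
        / (n + 1) := by
    funext w; exact PvecF_eq n m S c w l
  rw [this]
  apply Measurable.div _ measurable_const
  apply Measurable.add measurable_const
  apply Finset.measurable_sum
  intro i _
  refine Measurable.ite (measSet_beats
      (meas_keyF hS (meas_coord n m (Fin.castAdd m i))) ?_)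
    measurable_const measurable_const
  apply Measurable.prodMk
  · exact hS.comp (((meas_coord n m (Fin.natAdd n l)).fst).prodMk measurable_const)
  · exact (meas_coord n m (Fin.natAdd n l)).snd.snd

lemma meas_ptil (j : Fin m) :
    Measurable fun w : Fin (n + m) → 𝓧 × ℝ × ℝ => ptil n m S j w := by
  unfold ptil
  apply Measurable.div _ measurable_const
  apply Measurable.add measurable_const
  apply Finset.measurable_sum
  intro i _
  exact Measurable.ite (measSet_beats (meas_keyF hS (meas_coord n m (Fin.castAdd m i)))
    (meas_keyF hS (meas_coord n m (Fin.natAdd n j)))) measurable_const measurable_const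

lemma meas_qvecF (j : Fin m) :
    Measurable fun w : Fin (n + m) → 𝓧 × ℝ × ℝ => qvecF n m S c j w := by
  apply measurable_pi_lambda
  intro l
  by_cases hl : l = j
  · subst hl
    have : (fun w : Fin (n + m) → 𝓧 × ℝ × ℝ => qvecF n m S c l w l)
        = fun w => ptil n m S l w := by
      funext w; rw [qvecF, Function.update_self]
    rw [this]
    exact meas_ptil n m hS l
  · have : (fun w : Fin (n + m) → 𝓧 × ℝ × ℝ => qvecF n m S c j w l)
        = fun w => PvecF n m S c w l := by
      funext w; rw [qvecF, Function.update_of_ne hl]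
    rw [this]
    exact (meas_PvecF n m hS c).eval
  
lemma meas_FjF (j : Fin m) :
    Measurable fun w : Fin (n + m) → 𝓧 × ℝ × ℝ => FjF n m S c α j w := by
  unfold FjF
  refine Measurable.ite ?_ ?_ measurable_const
  · exact (meas_qvecF n m hS c j) (meas_mem_bhSet m α j)
  · have h1 : Measurable fun k : ℕ => ((k : ℝ))⁻¹ := measurable_from_nat
    exact h1.comp ((meas_bhIndex m α).comp (meas_qvecF n m hS c j))

lemma meas_F :
    Measurable fun w : Fin (n + m) → 𝓧 × ℝ × ℝ =>
      fdp m (bhSet m α (PvecF n m S c w)) (fun j => (w (Fin.natAdd n j)).2.1 ≤ c j) := by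
  classical
  have heq : (fun w : Fin (n + m) → 𝓧 × ℝ × ℝ =>
      fdp m (bhSet m α (PvecF n m S c w)) (fun j => (w (Fin.natAdd n j)).2.1 ≤ c j))
      = fun w => ∑ j : Fin m,
          if ((w (Fin.natAdd n j)).2.1 ≤ c j ∧ j ∈ bhSet m α (PvecF n m S c w))
          then (max 1 ((bhSet m α (PvecF n m S c w)).card : ℝ))⁻¹ else 0 := by
    funext w
    rw [fdp_eq_sum]
  rw [heq]
  apply Finset.measurable_sum
  intro j _
  refine Measurable.ite ?_ ?_ measurable_const
  · apply MeasurableSet.inter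
    · exact measurableSet_le (meas_coord n m (Fin.natAdd n j)).snd.fst measurable_const
    · exact (meas_PvecF n m hS c) (meas_mem_bhSet m α j)
  · exact (Measurable.max measurable_const
      ((meas_card_bhSet m α).comp (meas_PvecF n m hS c))).inv

end MeasPi

section Prob

lemma map_joint_eq_pi {Ω E : Type*} [MeasurableSpace Ω] [MeasurableSpace E]
    (μ : Measure Ω) [IsProbabilityMeasure μ] {N : ℕ} (W : Fin N → Ω → E)
    (hW : ∀ i, Measurable (W i))
    (hindep : iIndepFun W μ) :
    μ.map (fun ω i => W i ω) = Measure.pi (fun i => μ.map (W i)) := by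
  haveI : ∀ i, IsProbabilityMeasure (μ.map (W i)) :=
    fun i => Measure.isProbabilityMeasure_map (hW i).aemeasurable
  refine (Measure.pi_eq fun s hs => ?_).symm
  rw [Measure.map_apply (measurable_pi_lambda _ fun i => hW i) (MeasurableSet.univ_pi hs)]
  have hpre : (fun ω i => W i ω) ⁻¹' (Set.univ.pi s) = ⋂ i ∈ Finset.univ, W i ⁻¹' s i := by
    ext ω; simp [Set.mem_pi]
  rw [hpre, hindep.measure_inter_preimage_eq_mul Finset.univ (fun i _ => hs i)]
  exact Finset.prod_congr rfl fun i _ => (Measure.map_apply (hW i) (hs i)).symm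

lemma measure_eq_zero_of_indep_unif {Ω : Type*} [MeasurableSpace Ω] (μ : Measure Ω)
    [IsProbabilityMeasure μ] {f g : Ω → ℝ} (hf : Measurable f) (hg : Measurable g)
    (hind : IndepFun f g μ)
    (hfd : μ.map f = volume.restrict (Set.Icc (0:ℝ) 1))
    (hgd : μ.map g = volume.restrict (Set.Icc (0:ℝ) 1)) :
    μ {ω | f ω = g ω} = 0 := by
  have hmap : μ.map (fun ω => (f ω, g ω)) = (μ.map f).prod (μ.map g) :=
    (indepFun_iff_map_prod_eq_prod_map_map hf.aemeasurable hg.aemeasurable).1 hind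
  have hdiag : MeasurableSet {p : ℝ × ℝ | p.1 = p.2} :=
    measurableSet_eq_fun measurable_fst measurable_snd
  have h1 : μ {ω | f ω = g ω} = (μ.map (fun ω => (f ω, g ω))) {p | p.1 = p.2} := by
    rw [Measure.map_apply (hf.prodMk hg) hdiag]; rfl
  rw [h1, hmap, hfd, hgd, Measure.prod_apply hdiag]
  have h2 : ∀ x : ℝ,
      (volume.restrict (Set.Icc (0:ℝ) 1)) (Prod.mk x ⁻¹' {p : ℝ × ℝ | p.1 = p.2}) = 0 := by
    intro x
    have hpre : (Prod.mk x ⁻¹' {p : ℝ × ℝ | p.1 = p.2}) = {x} := by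
      ext y; simp [eq_comm]
    rw [hpre]
    exact le_antisymm (le_trans (Measure.restrict_apply_le _ _) (by simp)) (zero_le ..)
  simp only [h2, MeasureTheory.lintegral_const, zero_mul, MeasureTheory.lintegral_zero]

lemma integrable_of_bounds {β : Type*} [MeasurableSpace β] (π : Measure β)
    [IsProbabilityMeasure π] {f : β → ℝ} (hf : Measurable f)
    (h0 : ∀ w, 0 ≤ f w) (h1 : ∀ w, f w ≤ 1) : Integrable f π :=
  (integrable_const 1).mono' hf.aestronglyMeasurable
    (Filter.Eventually.of_forall fun w => by
      rw [Real.norm_eq_abs, abs_of_nonneg (h0 w)]; exact h1 w)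

lemma integral_comp_perm {E : Type*} [MeasurableSpace E] {N : ℕ} (ν : Measure E)
    [IsProbabilityMeasure ν] (e : Fin N ≃ Fin N) (f : (Fin N → E) → ℝ) :
    ∫ w, f (w ∘ e) ∂(Measure.pi fun _ : Fin N => ν)
      = ∫ w, f w ∂(Measure.pi fun _ : Fin N => ν) := by
  set e' := e.symm with he'
  have hmp : MeasurePreserving (⇑(MeasurableEquiv.piCongrLeft (fun _ : Fin N => E) e'))
      (Measure.pi fun _ => ν) (Measure.pi fun _ => ν) :=
    measurePreserving_piCongrLeft (fun _ => ν) e'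
  have hcoe : ⇑(MeasurableEquiv.piCongrLeft (fun _ : Fin N => E) e')
      = fun w => w ∘ e := by
    funext w
    funext a
    have h := MeasurableEquiv.piCongrLeft_apply_apply e' (β := fun _ => E) w (e'.symm a)
    rw [Equiv.apply_symm_apply] at h
    rw [MeasurableEquiv.coe_piCongrLeft] at h ⊢
    rw [h]
    simp [he']
  rw [← hmp.integral_comp (MeasurableEquiv.piCongrLeft (fun _ : Fin N => E) e').measurableEmbedding f]
  congr 1
  funext w
  rw [hcoe]

lemma FjF_nonneg {𝓧 : Type*} (n m : ℕ) (S : 𝓧 → ℝ → ℝ) (c : Fin m → ℝ) (α : ℝ) (j : Fin m)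
    (w : Fin (n + m) → 𝓧 × ℝ × ℝ) : 0 ≤ FjF n m S c α j w := by
  rw [FjF]
  split_ifs
  · positivity
  · exact le_rfl

lemma FjF_le_one {𝓧 : Type*} (n m : ℕ) (S : 𝓧 → ℝ → ℝ) (c : Fin m → ℝ) (α : ℝ) (j : Fin m)
    (w : Fin (n + m) → 𝓧 × ℝ × ℝ) : FjF n m S c α j w ≤ 1 := by
  rw [FjF]
  split_ifs with h
  · have hne := (mem_bhSet.1 h).1
    have : (1:ℝ) ≤ (bhIndex m α (qvecF n m S c j w) : ℝ) := by
      exact_mod_cast Nat.one_le_iff_ne_zero.2 hne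
    exact inv_le_one_of_one_le₀ this
  · norm_num

lemma fdp_nonneg (m : ℕ) (R : Finset (Fin m)) (null : Fin m → Prop) [DecidablePred null] :
    0 ≤ fdp m R null := by
  rw [fdp]
  positivity

lemma fdp_le_one (m : ℕ) (R : Finset (Fin m)) (null : Fin m → Prop) [DecidablePred null] :
    fdp m R null ≤ 1 := by
  rw [fdp]
  have h1 : ((R.filter null).card : ℝ) ≤ max 1 (R.card : ℝ) := by
    calc ((R.filter null).card : ℝ) ≤ (R.card : ℝ) := by
          exact_mod_cast Finset.card_le_card (Finset.filter_subset _ _)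
      _ ≤ max 1 (R.card : ℝ) := le_max_right _ _
  apply div_le_one_of_le₀ h1
  positivity

end Prob


theorem conformal_selection_fdr_control
    {Ω 𝓧 : Type*} [MeasurableSpace Ω] [MeasurableSpace 𝓧]
    (μ : Measure Ω) [IsProbabilityMeasure μ]
    (n m : ℕ)
    (X : Fin (n + m) → Ω → 𝓧) (Y : Fin (n + m) → Ω → ℝ) (U : Fin (n + m) → Ω → ℝ)
    (hX : ∀ i, Measurable (X i)) (hY : ∀ i, Measurable (Y i))
    (hU : ∀ i, Measurable (U i))
    -- (i) the combined calibration and test data are i.i.d.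
    (hindep : iIndepFun
      (fun i ω => (X i ω, Y i ω, U i ω)) μ)
    (hident : ∀ i j : Fin (n + m),
      IdentDistrib (fun ω => (X i ω, Y i ω, U i ω))
        (fun ω => (X j ω, Y j ω, U j ω)) μ μ)
    -- the tie-breaking variables are uniform on [0,1] and independent of the pairs
    (hUunif : ∀ i, μ.map (U i) = volume.restrict (Set.Icc (0 : ℝ) 1))
    (hUindep : ∀ i, IndepFun (fun ω => (X i ω, Y i ω)) (U i) μ)
    -- (ii) nonnegative score, monotone non-increasing in the response
    (S : 𝓧 → ℝ → ℝ) (hSmeas : Measurable fun p : 𝓧 × ℝ => S p.1 p.2)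
    (hS_nonneg : ∀ x y, 0 ≤ S x y)
    (hS_mono : ∀ x y y', y ≤ y' → S x y' ≤ S x y)
    -- thresholds and target FDR level, fixed in advance
    (c : Fin m → ℝ) (αmax : ℝ) (hα : αmax ∈ Set.Ioo (0 : ℝ) 1) :
    -- FDR(R^CS_αmax) ≤ αmax
    ∫ ω,
        fdp m
          (bhSet m αmax
            (conformalP n m S (fun i => X i ω) (fun i => Y i ω) (fun i => U i ω) c))
          (fun j => Y (Fin.natAdd n j) ω ≤ c j) ∂μ ≤ αmax := by

  classical
  obtain ⟨hα0, hα1⟩ := hα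
  rcases Nat.eq_zero_or_pos m with hm0 | hm
  · subst hm0
    have hzero : ∀ ω : Ω,
        fdp 0 (bhSet 0 αmax
            (conformalP n 0 S (fun i => X i ω) (fun i => Y i ω) (fun i => U i ω) c))
          (fun j => Y (Fin.natAdd n j) ω ≤ c j) = 0 := by
      intro ω
      rw [fdp]
      have : (bhSet 0 αmax
          (conformalP n 0 S (fun i => X i ω) (fun i => Y i ω) (fun i => U i ω) c)).filter
            (fun j => Y (Fin.natAdd n j) ω ≤ c j) = ∅ := Finset.eq_empty_of_isEmpty _
      rw [this]
      simp
    simp only [hzero, integral_zero]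
    exact hα0.le
  · set W : Fin (n + m) → Ω → 𝓧 × ℝ × ℝ := fun i ω => (X i ω, Y i ω, U i ω) with hWdef
    have hWm : ∀ i, Measurable (W i) := fun i => (hX i).prodMk ((hY i).prodMk (hU i))
    set Wt : Ω → (Fin (n + m) → 𝓧 × ℝ × ℝ) := fun ω i => W i ω with hWtdef
    have hWtm : Measurable Wt := measurable_pi_lambda _ hWm
    set F : (Fin (n + m) → 𝓧 × ℝ × ℝ) → ℝ := fun w =>
      fdp m (bhSet m αmax (PvecF n m S c w))
        (fun j => (w (Fin.natAdd n j)).2.1 ≤ c j) with hFdef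
    have hFm : Measurable F := meas_F n m hSmeas c αmax
    have hNpos : 0 < n + m := by omega
    set i0 : Fin (n + m) := ⟨0, hNpos⟩ with hi0
    set ν : Measure (𝓧 × ℝ × ℝ) := μ.map (W i0) with hν
    haveI hνP : IsProbabilityMeasure ν := Measure.isProbabilityMeasure_map (hWm i0).aemeasurable
    set π : Measure (Fin (n + m) → 𝓧 × ℝ × ℝ) := Measure.pi (fun _ => ν) with hπ
    haveI hπP : IsProbabilityMeasure π := by rw [hπ]; infer_instance
    have hmarg : (fun i => μ.map (W i)) = fun _ => ν :=
      funext fun i => (hident i i0).map_eq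
    have hmap : μ.map Wt = π := by
      rw [hWtdef, map_joint_eq_pi μ W hWm hindep, hmarg, hπ]
    have hgoal1 : ∫ ω,
        fdp m (bhSet m αmax
            (conformalP n m S (fun i => X i ω) (fun i => Y i ω) (fun i => U i ω) c))
          (fun j => Y (Fin.natAdd n j) ω ≤ c j) ∂μ
        = ∫ w, F w ∂π := by
      rw [← hmap]
      rw [integral_map hWtm.aemeasurable hFm.aestronglyMeasurable]
      rfl
    rw [hgoal1]
    -- integrability
    have hintF : Integrable F π :=
      integrable_of_bounds π hFm (fun w => fdp_nonneg m _ _) (fun w => fdp_le_one m _ _)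
    have hintFj : ∀ j : Fin m, Integrable (FjF n m S c αmax j) π := fun j =>
      integrable_of_bounds π (meas_FjF n m hSmeas c αmax j)
        (fun w => FjF_nonneg n m S c αmax j w) (fun w => FjF_le_one n m S c αmax j w)
    have step1 : ∫ w, F w ∂π ≤ ∑ j : Fin m, ∫ w, FjF n m S c αmax j w ∂π := by
      calc ∫ w, F w ∂π ≤ ∫ w, (∑ j : Fin m, FjF n m S c αmax j w) ∂π := by
            apply integral_mono hintF (integrable_finset_sum _ fun j _ => hintFj j)
            intro w
            exact fdp_le_sum_FjF n m S c αmax w hα0.le hS_mono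
        _ = ∑ j : Fin m, ∫ w, FjF n m S c αmax j w ∂π :=
            integral_finset_sum _ (fun j _ => (hintFj j))
    -- a.e. distinct tie-breakers
    have hDn : ∀ v v' : Fin (n + m), v ≠ v' → π {w | (w v).2.2 = (w v').2.2} = 0 := by
      intro v v' hne
      have hms : MeasurableSet {w : Fin (n + m) → 𝓧 × ℝ × ℝ | (w v).2.2 = (w v').2.2} :=
        measurableSet_eq_fun (measurable_pi_apply v).snd.snd (measurable_pi_apply v').snd.snd
      rw [← hmap, Measure.map_apply hWtm hms]
      have hpre : Wt ⁻¹' {w | (w v).2.2 = (w v').2.2} = {ω | U v ω = U v' ω} := rfl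
      rw [hpre]
      refine measure_eq_zero_of_indep_unif μ (hU v) (hU v') ?_ (hUunif v) (hUunif v')
      have h1 : IndepFun (W v) (W v') μ := hindep.indepFun hne
      have h2 := h1.comp (φ := fun e : 𝓧 × ℝ × ℝ => e.2.2)
        (ψ := fun e : 𝓧 × ℝ × ℝ => e.2.2) measurable_snd.snd measurable_snd.snd
      exact h2
    have hae : ∀ᵐ w ∂π, ∀ v v' : Fin (n + m), v ≠ v' → (w v).2.2 ≠ (w v').2.2 := by
      rw [ae_iff]
      refine measure_mono_null (fun w hw => ?_)
        (measure_iUnion_null (s := fun v : Fin (n+m) =>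
          ⋃ (v' : Fin (n+m)) (_ : v ≠ v'),
            {w : Fin (n + m) → 𝓧 × ℝ × ℝ | (w v).2.2 = (w v').2.2})
          fun v => measure_iUnion_null fun v' =>
            measure_iUnion_null fun hne => hDn v v' hne)
      simp only [Set.mem_setOf_eq, not_forall] at hw
      obtain ⟨v, v', hne, heq⟩ := hw
      simp only [Set.mem_iUnion]
      exact ⟨v, v', hne, by simpa using heq⟩
    -- per-j bound via exchangeability
    have step2 : ∀ j : Fin m, ∫ w, FjF n m S c αmax j w ∂π ≤ αmax / m := by
      intro j
      have hswap : ∀ g : Fin (n + m),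
          ∫ w, FjF n m S c αmax j (w ∘ (Equiv.swap g (Fin.natAdd n j))) ∂π
            = ∫ w, FjF n m S c αmax j w ∂π := by
        intro g
        rw [hπ]
        exact integral_comp_perm ν (Equiv.swap g (Fin.natAdd n j)) (FjF n m S c αmax j)
      have hintswap : ∀ g : Fin (n + m),
          Integrable (fun w => FjF n m S c αmax j (w ∘ (Equiv.swap g (Fin.natAdd n j)))) π := by
        intro g
        refine integrable_of_bounds π ?_ (fun w => FjF_nonneg n m S c αmax j _)
          (fun w => FjF_le_one n m S c αmax j _)
        exact (meas_FjF n m hSmeas c αmax j).comp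
          (measurable_pi_lambda _ fun a => measurable_pi_apply _)
      have hub : ∫ w, (∑ g ∈ grp n m j,
          FjF n m S c αmax j (w ∘ (Equiv.swap g (Fin.natAdd n j)))) ∂π
            ≤ αmax * (n + 1) / m := by
        have hconst : ∫ _w, (αmax * (n + 1) / m) ∂π = αmax * (n + 1) / m := by
          rw [integral_const]
          simp
        rw [← hconst]
        apply integral_mono_ae (integrable_finset_sum _ fun g _ => hintswap g)
          (integrable_const _)
        filter_upwards [hae] with w hw
        exact core_swap_bound n m S c αmax j w hα0.le hm hw
      have hsum : ∑ g ∈ grp n m j, ∫ w,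
          FjF n m S c αmax j (w ∘ (Equiv.swap g (Fin.natAdd n j))) ∂π
            = ((n : ℝ) + 1) * ∫ w, FjF n m S c αmax j w ∂π := by
        rw [Finset.sum_congr rfl (fun g _ => hswap g), Finset.sum_const, card_grp,
          nsmul_eq_mul]
        push_cast
        ring
      have hexch : ((n : ℝ) + 1) * ∫ w, FjF n m S c αmax j w ∂π ≤ αmax * (n + 1) / m := by
        rw [← hsum, ← integral_finset_sum _ (fun g _ => hintswap g)]
        exact hub
      have hn1 : (0:ℝ) < (n : ℝ) + 1 := by positivity
      have h2 : ((n:ℝ)+1) * ∫ w, FjF n m S c αmax j w ∂π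
          ≤ ((n:ℝ)+1) * (αmax / m) := by
        calc ((n:ℝ)+1) * ∫ w, FjF n m S c αmax j w ∂π ≤ αmax * (n + 1) / m := hexch
          _ = ((n:ℝ)+1) * (αmax / m) := by ring
      exact le_of_mul_le_mul_left h2 hn1
    calc ∫ w, F w ∂π ≤ ∑ j : Fin m, ∫ w, FjF n m S c αmax j w ∂π := step1
      _ ≤ ∑ _j : Fin m, αmax / m := Finset.sum_le_sum fun j _ => step2 j
      _ = αmax := by
        rw [Finset.sum_const, Finset.card_univ, Fintype.card_fin, nsmul_eq_mul]
        field_simp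
end

section
/- The oracle conformal e-variable has unit mean under exchangeability. Let S_1,…,S_n, S_{n+1} be nonnegative real-valued random variables whose joint law is exchangeable (invariant under permutations of the n+1 coordinates), and assume Σ_{i=1}^{n} S_i + S_{n+1} > 0 almost surely. Then E[ (n+1) S_{n+1} / ( Σ_{i=1}^{n} S_i + S_{n+1} ) ] = 1. -/
/-!
STATEMENT 4: The oracle conformal e-variable has unit mean under exchangeability.
`S 0, …, S (n-1)` are the calibration scores and `S (Fin.last n)` plays the role
of `S_{n+1}`; exchangeability says the joint law of the `n+1` scores is invariant
under every permutation of the coordinates.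
-/

open MeasureTheory ProbabilityTheory

theorem oracle_conformal_evariable_unit_mean
    {Ω : Type*} [MeasurableSpace Ω] (μ : Measure Ω) [IsProbabilityMeasure μ]
    (n : ℕ) (S : Fin (n + 1) → Ω → ℝ)
    (hmeas : ∀ i, Measurable (S i))
    (hnonneg : ∀ i ω, 0 ≤ S i ω)
    (hexch : ∀ σ : Equiv.Perm (Fin (n + 1)),
      Measure.map (fun ω => fun i => S (σ i) ω) μ
        = Measure.map (fun ω => fun i => S i ω) μ)
    (hpos : ∀ᵐ ω ∂μ, 0 < ∑ i, S i ω) :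
    ∫ ω, (n + 1 : ℝ) * S (Fin.last n) ω / (∑ i, S i ω) ∂μ = 1 := by
  set f : Fin (n + 1) → Ω → ℝ := fun j ω => S j ω / ∑ i, S i ω with hf
  have hmsum : Measurable fun ω => ∑ i, S i ω :=
    Finset.measurable_sum _ fun i _ => hmeas i
  have hmf : ∀ j, Measurable (f j) := fun j => (hmeas j).div hmsum
  have hb : ∀ j ω, f j ω ∈ Set.Icc (0 : ℝ) 1 := by
    intro j ω
    constructor
    · exact div_nonneg (hnonneg j ω) (Finset.sum_nonneg fun i _ => hnonneg i ω)
    · refine div_le_one_of_le₀ ?_ (Finset.sum_nonneg fun i _ => hnonneg i ω)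
      exact Finset.single_le_sum (f := fun i => S i ω) (fun i _ => hnonneg i ω)
        (Finset.mem_univ j)
  have hint : ∀ j, Integrable (f j) μ := by
    intro j
    refine ⟨(hmf j).aestronglyMeasurable, ?_⟩
    refine HasFiniteIntegral.of_bounded (C := 1) (ae_of_all _ fun ω => ?_)
    rw [Real.norm_eq_abs, abs_of_nonneg (hb j ω).1]
    exact (hb j ω).2
  -- all f j have the same integral as f (last)
  have hkey : ∀ j, ∫ ω, f j ω ∂μ = ∫ ω, f (Fin.last n) ω ∂μ := by
    intro j
    set σ := Equiv.swap j (Fin.last n) with hσ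
    set g : (Fin (n + 1) → ℝ) → ℝ := fun x => x (Fin.last n) / ∑ i, x i with hg
    have hgm : Measurable g :=
      (measurable_pi_apply _).div (Finset.measurable_sum _ fun i _ => measurable_pi_apply i)
    have hT : Measurable fun ω => fun i => S i ω :=
      measurable_pi_lambda _ fun i => hmeas i
    have hT' : Measurable fun ω => fun i => S (σ i) ω :=
      measurable_pi_lambda _ fun i => hmeas (σ i)
    have h1 : ∫ ω, g (fun i => S (σ i) ω) ∂μ = ∫ ω, g (fun i => S i ω) ∂μ := by
      rw [← integral_map hT'.aemeasurable hgm.aestronglyMeasurable,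
        ← integral_map hT.aemeasurable hgm.aestronglyMeasurable, hexch σ]
    have h2 : ∀ ω, g (fun i => S (σ i) ω) = f j ω := by
      intro ω
      simp only [hg, hf]
      rw [Equiv.swap_apply_right]
      congr 1
      exact Fintype.sum_equiv σ _ _ fun i => rfl
    have h3 : ∀ ω, g (fun i => S i ω) = f (Fin.last n) ω := fun ω => rfl
    simpa [h2, h3] using h1
  have hsum : ∑ j, ∫ ω, f j ω ∂μ = 1 := by
    rw [← integral_finset_sum _ fun j _ => hint j]
    have : ∀ᵐ ω ∂μ, (∑ j, f j ω) = (1 : ℝ) := by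
      filter_upwards [hpos] with ω hω
      simp only [hf]
      rw [← Finset.sum_div, div_self hω.ne']
    rw [integral_congr_ae this, integral_const, probReal_univ]
    simp
  have hlast : ∫ ω, f (Fin.last n) ω ∂μ = 1 / (n + 1 : ℝ) := by
    have : ∑ j : Fin (n + 1), ∫ ω, f j ω ∂μ
        = (n + 1 : ℝ) * ∫ ω, f (Fin.last n) ω ∂μ := by
      rw [Finset.sum_congr rfl fun j _ => hkey j]
      simp [Finset.sum_const, mul_comm]
    rw [this] at hsum
    field_simp at hsum ⊢
    linarith
  calc ∫ ω, (n + 1 : ℝ) * S (Fin.last n) ω / (∑ i, S i ω) ∂μ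
      = (n + 1 : ℝ) * ∫ ω, f (Fin.last n) ω ∂μ := by
        rw [← integral_const_mul]
        congr 1 with ω
        simp [hf, mul_div_assoc]
    _ = 1 := by rw [hlast]; field_simp
end

section
/- The conformal e-variable is a risk-adjusted e-variable for the binary null. Let (X_1,Y_1),…,(X_n,Y_n),(X_{n+1},Y_{n+1}) be exchangeable, let S(X,Y) ≥ 0 be monotone non-increasing in Y, let c be a fixed threshold, and define calibration scores S_i = S(X_i,Y_i) for i = 1,…,n and the test score Ŝ = S(X_{n+1}, c). Assume Σ_{i=1}^n S_i + S(X_{n+1},Y_{n+1}) > 0 and Σ_{i=1}^n S_i + Ŝ > 0 almost surely. Then the conformal e-variable E = Ŝ / ( (1/(n+1)) ( Σ_{i=1}^n S_i + Ŝ ) ) satisfies E[ 1{Y_{n+1} ≤ c} · E ] ≤ 1. -/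
/-!
STATEMENT 6: The conformal e-variable is a risk-adjusted e-variable for the
binary null.  The pairs `(X i, Y i)`, `i : Fin (n+1)`, are exchangeable, the
calibration points are indexed by `i.castSucc` for `i : Fin n` and the test
point by `Fin.last n`; the test score is evaluated at the fixed threshold `c`.
-/

open MeasureTheory ProbabilityTheory

theorem conformal_evariable_is_risk_adjusted
    {Ω 𝓧 : Type*} [MeasurableSpace Ω] [MeasurableSpace 𝓧]
    (μ : Measure Ω) [IsProbabilityMeasure μ]
    (n : ℕ) (X : Fin (n + 1) → Ω → 𝓧) (Y : Fin (n + 1) → Ω → ℝ)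
    (hX : ∀ i, Measurable (X i)) (hY : ∀ i, Measurable (Y i))
    (S : 𝓧 → ℝ → ℝ) (hSmeas : Measurable fun p : 𝓧 × ℝ => S p.1 p.2)
    (hS_nonneg : ∀ x y, 0 ≤ S x y)
    (hS_mono : ∀ x y y', y ≤ y' → S x y' ≤ S x y)
    (c : ℝ)
    (hexch : ∀ σ : Equiv.Perm (Fin (n + 1)),
      Measure.map (fun ω => fun i => (X (σ i) ω, Y (σ i) ω)) μ
        = Measure.map (fun ω => fun i => (X i ω, Y i ω)) μ)
    (hpos_oracle : ∀ᵐ ω ∂μ,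
      0 < ∑ i : Fin n, S (X i.castSucc ω) (Y i.castSucc ω)
            + S (X (Fin.last n) ω) (Y (Fin.last n) ω))
    (hpos_test : ∀ᵐ ω ∂μ,
      0 < ∑ i : Fin n, S (X i.castSucc ω) (Y i.castSucc ω)
            + S (X (Fin.last n) ω) c) :
    ∫ ω, (if Y (Fin.last n) ω ≤ c then (1 : ℝ) else 0) *
        (S (X (Fin.last n) ω) c /
          ((1 / (n + 1 : ℝ)) *
            (∑ i : Fin n, S (X i.castSucc ω) (Y i.castSucc ω)
              + S (X (Fin.last n) ω) c))) ∂μ ≤ 1 := by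
  classical
  set T : Fin (n + 1) → Ω → ℝ := fun i ω => S (X i ω) (Y i ω) with hT
  have hTmeas : ∀ i, Measurable (T i) := fun i =>
    hSmeas.comp ((hX i).prodMk (hY i))
  set Tot : Ω → ℝ := fun ω => ∑ i, T i ω with hTot
  have hTotmeas : Measurable Tot := Finset.measurable_sum _ fun i _ => hTmeas i
  have hTnonneg : ∀ i ω, 0 ≤ T i ω := fun i ω => hS_nonneg _ _
  have hTotpos : ∀ᵐ ω ∂μ, 0 < Tot ω := by
    filter_upwards [hpos_oracle] with ω h
    simpa [hTot, hT, Fin.sum_univ_castSucc] using h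
  set f : Fin (n + 1) → Ω → ℝ := fun i ω => T i ω / Tot ω with hf
  have hfmeas : ∀ i, Measurable (f i) := fun i => (hTmeas i).div hTotmeas
  have hfbd : ∀ᵐ ω ∂μ, ∀ i, f i ω ∈ Set.Icc (0 : ℝ) 1 := by
    filter_upwards [hTotpos] with ω hω i
    constructor
    · exact div_nonneg (hTnonneg i ω) hω.le
    · rw [div_le_one hω]
      exact Finset.single_le_sum (fun j _ => hTnonneg j ω) (Finset.mem_univ i)
  have hfint : ∀ i, Integrable (f i) μ := by
    intro i
    refine (integrable_const (1 : ℝ)).mono' (hfmeas i).aestronglyMeasurable ?_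
    filter_upwards [hfbd] with ω h
    have h' := h i
    rw [Real.norm_eq_abs, abs_of_nonneg h'.1]
    simpa using h'.2
  -- the permutation-invariant functional
  set g : (Fin (n + 1) → 𝓧 × ℝ) → ℝ :=
    fun z => S (z (Fin.last n)).1 (z (Fin.last n)).2 / ∑ j, S (z j).1 (z j).2 with hg
  have hgmeas : Measurable g := by
    apply Measurable.div
    · exact hSmeas.comp (measurable_pi_apply (Fin.last n))
    · exact Finset.measurable_sum _ fun j _ => hSmeas.comp (measurable_pi_apply j)
  have hZmeas : ∀ σ : Equiv.Perm (Fin (n + 1)),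
      Measurable (fun ω => fun j => (X (σ j) ω, Y (σ j) ω)) := fun σ =>
    measurable_pi_lambda _ fun j => (hX (σ j)).prodMk (hY (σ j))
  have hZ0meas : Measurable (fun ω => fun j : Fin (n + 1) => (X j ω, Y j ω)) :=
    measurable_pi_lambda _ fun j => (hX j).prodMk (hY j)
  have key : ∀ i, ∫ ω, f i ω ∂μ = ∫ ω, f (Fin.last n) ω ∂μ := by
    intro i
    set σ : Equiv.Perm (Fin (n + 1)) := Equiv.swap (Fin.last n) i with hσ
    have h2 : ∀ ω, g (fun j => (X (σ j) ω, Y (σ j) ω)) = f i ω := by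
      intro ω
      have hsum : (∑ j, S (X (σ j) ω) (Y (σ j) ω)) = Tot ω :=
        Equiv.sum_comp σ (fun j => S (X j ω) (Y j ω))
      simp only [hg, hf, hT]
      rw [hsum]
      rw [show σ (Fin.last n) = i from Equiv.swap_apply_left _ _]
    have h3 : ∀ ω, g (fun j : Fin (n + 1) => (X j ω, Y j ω)) = f (Fin.last n) ω := by
      intro ω; rfl
    calc ∫ ω, f i ω ∂μ = ∫ ω, g (fun j => (X (σ j) ω, Y (σ j) ω)) ∂μ := by
          simp_rw [h2]
      _ = ∫ z, g z ∂(Measure.map (fun ω => fun j => (X (σ j) ω, Y (σ j) ω)) μ) := by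
          rw [integral_map (hZmeas σ).aemeasurable hgmeas.aestronglyMeasurable]
      _ = ∫ z, g z ∂(Measure.map (fun ω => fun j : Fin (n + 1) => (X j ω, Y j ω)) μ) := by
          rw [hexch σ]
      _ = ∫ ω, g (fun j : Fin (n + 1) => (X j ω, Y j ω)) ∂μ := by
          rw [integral_map hZ0meas.aemeasurable hgmeas.aestronglyMeasurable]
      _ = ∫ ω, f (Fin.last n) ω ∂μ := rfl
  have hsum1 : (∑ i, ∫ ω, f i ω ∂μ) = 1 := by
    rw [← integral_finset_sum _ fun i _ => hfint i]
    have hae : ∀ᵐ ω ∂μ, (∑ i, f i ω) = 1 := by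
      filter_upwards [hTotpos] with ω hω
      simp only [hf]
      rw [← Finset.sum_div, div_self hω.ne']
    rw [integral_congr_ae hae]
    simp
  have hlast : ∫ ω, f (Fin.last n) ω ∂μ = 1 / (n + 1 : ℝ) := by
    have h1 : (∑ i : Fin (n + 1), ∫ ω, f i ω ∂μ)
        = (n + 1 : ℝ) * ∫ ω, f (Fin.last n) ω ∂μ := by
      rw [Finset.sum_congr rfl fun i _ => key i, Finset.sum_const]
      simp [nsmul_eq_mul]
    have hnp : (0 : ℝ) < (n : ℝ) + 1 := by positivity
    rw [h1] at hsum1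
    rw [eq_div_iff hnp.ne', mul_comm]
    exact hsum1
  have hnp : (0 : ℝ) < (n : ℝ) + 1 := by positivity
  have hbound : ∀ᵐ ω ∂μ,
      (if Y (Fin.last n) ω ≤ c then (1 : ℝ) else 0) *
        (S (X (Fin.last n) ω) c /
          ((1 / (n + 1 : ℝ)) *
            (∑ i : Fin n, S (X i.castSucc ω) (Y i.castSucc ω)
              + S (X (Fin.last n) ω) c)))
        ≤ ((n : ℝ) + 1) * f (Fin.last n) ω := by
    filter_upwards [hpos_oracle, hpos_test] with ω h1 h2
    set A : ℝ := ∑ i : Fin n, S (X i.castSucc ω) (Y i.castSucc ω) with hA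
    set s : ℝ := S (X (Fin.last n) ω) c with hs
    set t : ℝ := T (Fin.last n) ω with ht
    have hAnn : (0 : ℝ) ≤ A := Finset.sum_nonneg fun j _ => hS_nonneg _ _
    have h1' : 0 < A + t := h1
    have h2' : 0 < A + s := h2
    have hflast : f (Fin.last n) ω = t / (A + t) := by
      simp only [hf, hTot, hT, Fin.sum_univ_castSucc]
      rfl
    rw [hflast]
    by_cases hyc : Y (Fin.last n) ω ≤ c
    · rw [if_pos hyc, one_mul]
      have hst : s ≤ t := hS_mono _ _ _ hyc
      have e1 : s / ((1 / (n + 1 : ℝ)) * (A + s)) = ((n : ℝ) + 1) * (s / (A + s)) := by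
        field_simp
      rw [e1]
      apply mul_le_mul_of_nonneg_left _ hnp.le
      rw [div_le_div_iff₀ h2' h1']
      nlinarith
    · rw [if_neg hyc, zero_mul]
      have ht0 : 0 ≤ t := hTnonneg _ _
      positivity
  calc ∫ ω, (if Y (Fin.last n) ω ≤ c then (1 : ℝ) else 0) *
        (S (X (Fin.last n) ω) c /
          ((1 / (n + 1 : ℝ)) *
            (∑ i : Fin n, S (X i.castSucc ω) (Y i.castSucc ω)
              + S (X (Fin.last n) ω) c))) ∂μ
      ≤ ∫ ω, ((n : ℝ) + 1) * f (Fin.last n) ω ∂μ := by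
        refine integral_mono_of_nonneg ?_ ((hfint _).const_mul _) hbound
        filter_upwards [hpos_test] with ω h
        have hind : (0 : ℝ) ≤ (if Y (Fin.last n) ω ≤ c then (1 : ℝ) else 0) := by
          split <;> norm_num
        apply mul_nonneg hind
        apply div_nonneg (hS_nonneg _ _)
        exact mul_nonneg (by positivity) h.le
    _ = ((n : ℝ) + 1) * (1 / ((n : ℝ) + 1)) := by
        rw [integral_const_mul, hlast]
    _ = 1 := by field_simp
end

section
/- Deterministic FDP bound for self-consistent selection sets (binary losses). Let e_1,…,e_m ≥ 0 and e_1*,…,e_m* ≥ 0 be real numbers, let N ⊆ {1,…,m} be a set of null indices, and assume e_j ≤ e_j* for every j ∈ N. Fix α ∈ (0,1) and let R ⊆ {1,…,m} be a set that is self-consistent at level α, i.e., every j ∈ R satisfies e_j ≥ m/(α|R|). Then the false discovery proportion satisfies |R ∩ N| / max{1, |R|} ≤ (α/m) Σ_{j=1}^{m} e_j*, equivalently ( |R ∩ N| / max{1,|R|} ) / α ≤ (1/m) Σ_{j=1}^{m} e_j*. -/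
/-!
STATEMENT 7: Deterministic FDP bound for self-consistent selection sets
(binary losses).  `N` is the set of null indices, and `R` is self-consistent at
level `α`: every selected `j` has `e j ≥ m/(α |R|)`.
-/

theorem fdp_bound_for_self_consistent_sets
    (m : ℕ) (e estar : Fin m → ℝ)
    (he : ∀ j, 0 ≤ e j) (hestar : ∀ j, 0 ≤ estar j)
    (N : Finset (Fin m))
    (hdom : ∀ j ∈ N, e j ≤ estar j)
    (α : ℝ) (hα : α ∈ Set.Ioo (0 : ℝ) 1)
    (R : Finset (Fin m))
    (hsc : ∀ j ∈ R, (m : ℝ) / (α * R.card) ≤ e j) :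
    ((R ∩ N).card : ℝ) / max 1 (R.card : ℝ) ≤ α / m * ∑ j, estar j
      ∧ (((R ∩ N).card : ℝ) / max 1 (R.card : ℝ)) / α ≤ (1 / m) * ∑ j, estar j := by
  obtain ⟨hα0, hα1⟩ := hα
  have hS : 0 ≤ ∑ j, estar j := Finset.sum_nonneg fun j _ => hestar j
  have key : ((R ∩ N).card : ℝ) / max 1 (R.card : ℝ) ≤ α / m * ∑ j, estar j := by
    rcases R.eq_empty_or_nonempty with rfl | hR
    · simp [div_nonneg, hα0.le, hS, mul_nonneg]

    · have hm : 0 < m := hR.choose.pos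
      have hmR : (0 : ℝ) < m := by exact_mod_cast hm
      have hRc : (0 : ℝ) < R.card := by exact_mod_cast hR.card_pos
      have hmax : max 1 (R.card : ℝ) = R.card := by
        rw [max_eq_right]
        exact_mod_cast hR.card_pos
      have h1 : ((R ∩ N).card : ℝ) * ((m : ℝ) / (α * R.card)) ≤ ∑ j, estar j := by
        calc ((R ∩ N).card : ℝ) * ((m : ℝ) / (α * R.card))
            = ∑ _j ∈ R ∩ N, (m : ℝ) / (α * R.card) := by
              rw [Finset.sum_const, nsmul_eq_mul]
          _ ≤ ∑ j ∈ R ∩ N, estar j := by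
              refine Finset.sum_le_sum fun j hj => ?_
              have hjR := Finset.mem_of_mem_inter_left hj
              have hjN := Finset.mem_of_mem_inter_right hj
              exact (hsc j hjR).trans (hdom j hjN)
          _ ≤ ∑ j, estar j := Finset.sum_le_sum_of_subset_of_nonneg
              (Finset.subset_univ _) (fun j _ _ => hestar j)
      rw [hmax]
      rw [div_le_iff₀ hRc]
      have := mul_le_mul_of_nonneg_left h1 (by positivity : (0:ℝ) ≤ α / m)
      calc ((R ∩ N).card : ℝ)
          = α / m * (((R ∩ N).card : ℝ) * ((m : ℝ) / (α * R.card))) * R.card := by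
            field_simp
        _ ≤ α / m * (∑ j, estar j) * R.card := by
            exact mul_le_mul_of_nonneg_right this hRc.le
  refine ⟨key, ?_⟩
  rw [div_le_iff₀ hα0] at *
  calc ((R ∩ N).card : ℝ) / max 1 (R.card : ℝ) ≤ α / m * ∑ j, estar j := key
    _ = 1 / m * (∑ j, estar j) * α := by ring
end

section
/- Fixed-level generalized FDR control of e-BH with risk-adjusted e-variables. Let L_1,…,L_m ∈ [0,1] be random losses and E_1^g,…,E_m^g ≥ 0 random variables satisfying E[ L_j E_j^g ] ≤ 1 for each j = 1,…,m. Fix α ∈ (0,1) and let R(α) be any (possibly random) set that is self-consistent at level α with respect to {E_j^g}, i.e., every j ∈ R(α) satisfies E_j^g ≥ m/(α|R(α)|). Then E[ Σ_{j ∈ R(α)} L_j / max{1, |R(α)|} ] ≤ α; that is, the generalized false discovery rate of R(α) is at most α. -/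
/-!
STATEMENT 11: Fixed-level generalized FDR control of e-BH with risk-adjusted
e-variables: if `E[L j * Eg j] ≤ 1` for every `j` and `R` is a (random)
self-consistent selection at level `α`, then the generalized FDR is at most `α`.
-/

open MeasureTheory ProbabilityTheory

theorem ebh_generalized_fdr_control
    {Ω : Type*} [MeasurableSpace Ω] (μ : Measure Ω) [IsProbabilityMeasure μ]
    (m : ℕ) (L Eg : Fin m → Ω → ℝ)
    (hLmeas : ∀ j, Measurable (L j)) (hEgmeas : ∀ j, Measurable (Eg j))
    (hL : ∀ j ω, L j ω ∈ Set.Icc (0 : ℝ) 1)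
    (hEg : ∀ j ω, 0 ≤ Eg j ω)
    (hInt : ∀ j, Integrable (fun ω => L j ω * Eg j ω) μ)
    (hrisk : ∀ j, ∫ ω, L j ω * Eg j ω ∂μ ≤ 1)
    (α : ℝ) (hα : α ∈ Set.Ioo (0 : ℝ) 1)
    (R : Ω → Finset (Fin m))
    (hRmeas : ∀ j, MeasurableSet {ω | j ∈ R ω})
    (hsc : ∀ ω, ∀ j ∈ R ω, (m : ℝ) / (α * (R ω).card) ≤ Eg j ω) :
    ∫ ω, (∑ j ∈ R ω, L j ω) / max 1 ((R ω).card : ℝ) ∂μ ≤ α := by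

  obtain ⟨hα0, hα1⟩ := hα
  set g : Ω → ℝ := fun ω => (α / m) * ∑ j, L j ω * Eg j ω with hg
  have hgint : Integrable g μ := (integrable_finset_sum _ (fun j _ => hInt j)).const_mul _
  have hpt : ∀ ω, (∑ j ∈ R ω, L j ω) / max 1 ((R ω).card : ℝ) ≤ g ω := by
    intro ω
    by_cases hR : (R ω).Nonempty
    · have hc : (1:ℝ) ≤ ((R ω).card : ℝ) := by exact_mod_cast Finset.card_pos.mpr hR
      have hc0 : (0:ℝ) < ((R ω).card : ℝ) := by linarith
      obtain ⟨j0, hj0⟩ := hR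
      have hm : 0 < (m:ℝ) := by exact_mod_cast j0.pos
      rw [max_eq_right hc, Finset.sum_div]
      calc ∑ j ∈ R ω, L j ω / ((R ω).card : ℝ)
          ≤ ∑ j ∈ R ω, (α / m) * (L j ω * Eg j ω) := by
            apply Finset.sum_le_sum
            intro j hj
            have h1 := hsc ω j hj
            have hL0 := (hL j ω).1
            calc L j ω / ((R ω).card : ℝ)
                = (α / m) * (L j ω * ((m:ℝ) / (α * (R ω).card))) := by
                  field_simp
              _ ≤ (α / m) * (L j ω * Eg j ω) := by
                  apply mul_le_mul_of_nonneg_left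
                  · exact mul_le_mul_of_nonneg_left h1 hL0
                  · positivity
        _ ≤ ∑ j, (α / m) * (L j ω * Eg j ω) := by
            apply Finset.sum_le_sum_of_subset_of_nonneg (Finset.subset_univ _)
            intro j _ _
            have := (hL j ω).1
            have := hEg j ω
            positivity
        _ = g ω := by simp [hg, Finset.mul_sum]
    · have : R ω = ∅ := Finset.not_nonempty_iff_eq_empty.mp hR
      simp only [this, Finset.sum_empty, zero_div, hg]
      have : (0:ℝ) ≤ ∑ j, L j ω * Eg j ω :=
        Finset.sum_nonneg fun j _ => mul_nonneg (hL j ω).1 (hEg j ω)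
      positivity
  have h0 : ∀ ω, 0 ≤ (∑ j ∈ R ω, L j ω) / max 1 ((R ω).card : ℝ) := by
    intro ω
    apply div_nonneg (Finset.sum_nonneg fun j _ => (hL j ω).1)
    exact le_trans zero_le_one (le_max_left _ _)
  have hmono := integral_mono_of_nonneg (Filter.Eventually.of_forall h0) hgint
    (Filter.Eventually.of_forall hpt)
  refine hmono.trans ?_
  have : ∫ ω, g ω ∂μ = (α / m) * ∑ j, ∫ ω, L j ω * Eg j ω ∂μ := by
    rw [hg]
    rw [integral_const_mul, integral_finset_sum _ (fun j _ => hInt j)]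
  rw [this]
  have hsum : ∑ j, ∫ ω, L j ω * Eg j ω ∂μ ≤ (m:ℝ) := by
    calc ∑ j, ∫ ω, L j ω * Eg j ω ∂μ ≤ ∑ _j : Fin m, (1:ℝ) :=
        Finset.sum_le_sum fun j _ => hrisk j
      _ = m := by simp
  rcases Nat.eq_zero_or_pos m with hm | hm
  · subst hm; simp; positivity
  · have hm' : (0:ℝ) < m := by exact_mod_cast hm
    have h1 : (α / m) * ∑ j, ∫ ω, L j ω * Eg j ω ∂μ ≤ (α / m) * m :=
      mul_le_mul_of_nonneg_left hsum (by positivity)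
    have h2 : (α / m) * m = α := by field_simp
    linarith
end

section
/- Weighted level-uniform bound under a weight budget (proof of Corollary 1). Let L_1,…,L_m ∈ [0,1] be random losses, E_1^g,…,E_m^g ≥ 0 random variables with E[ L_j E_j^g ] ≤ 1 for each j, and w_1,…,w_m ≥ 0 deterministic weights with Σ_{j=1}^{m} w_j ≤ m. Set Ẽ_j^g = w_j E_j^g. Then: (a) for every α ∈ (0,1) and every set R self-consistent at level α with respect to {Ẽ_j^g} (i.e., j ∈ R implies Ẽ_j^g ≥ m/(α|R|)), the deterministic bound FDP^g(R)/α ≤ (1/m) Σ_{j=1}^{m} w_j L_j E_j^g holds; and (b) E[ (1/m) Σ_{j=1}^{m} w_j L_j E_j^g ] ≤ (1/m) Σ_{j=1}^m w_j ≤ 1. -/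
/-!
STATEMENT 12: Weighted level-uniform bound under a weight budget.
Part (a): a deterministic (pointwise) generalized-FDP bound for every set that
is self-consistent with respect to the weighted e-values `w j * Eg j`.
Part (b): the expectation of the bounding quantity is at most `(1/m) Σ w j ≤ 1`.
-/

open MeasureTheory ProbabilityTheory

theorem weighted_level_uniform_bound
    {Ω : Type*} [MeasurableSpace Ω] (μ : Measure Ω) [IsProbabilityMeasure μ]
    (m : ℕ) (L Eg : Fin m → Ω → ℝ)
    (hL : ∀ j ω, L j ω ∈ Set.Icc (0 : ℝ) 1)
    (hEg : ∀ j ω, 0 ≤ Eg j ω)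
    (hInt : ∀ j, Integrable (fun ω => L j ω * Eg j ω) μ)
    (hrisk : ∀ j, ∫ ω, L j ω * Eg j ω ∂μ ≤ 1)
    (w : Fin m → ℝ) (hw : ∀ j, 0 ≤ w j) (hbudget : ∑ j, w j ≤ m) :
    (∀ ω : Ω, ∀ α ∈ Set.Ioo (0 : ℝ) 1, ∀ R : Finset (Fin m),
        (∀ j ∈ R, (m : ℝ) / (α * R.card) ≤ w j * Eg j ω) →
        ((∑ j ∈ R, L j ω) / max 1 (R.card : ℝ)) / α
          ≤ (1 / m) * ∑ j, w j * (L j ω * Eg j ω))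
      ∧ (∫ ω, (1 / (m : ℝ)) * ∑ j, w j * (L j ω * Eg j ω) ∂μ ≤ (1 / (m : ℝ)) * ∑ j, w j
          ∧ (1 / (m : ℝ)) * ∑ j, w j ≤ 1) := by
  have hterm : ∀ (j : Fin m) (ω : Ω), 0 ≤ w j * (L j ω * Eg j ω) := fun j ω =>
    mul_nonneg (hw j) (mul_nonneg (hL j ω).1 (hEg j ω))
  constructor
  · intro ω α hα R hR
    have hα0 := hα.1
    rcases R.eq_empty_or_nonempty with rfl | hRne
    · have h0 : (0:ℝ) ≤ (1/m) * ∑ j, w j * (L j ω * Eg j ω) :=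
        mul_nonneg (by positivity) (Finset.sum_nonneg fun j _ => hterm j ω)
      simpa using h0
    · have hcard : (0 : ℝ) < R.card := by
        exact_mod_cast Finset.card_pos.mpr hRne
      have hm : (0 : ℝ) < m := by
        obtain ⟨j, _⟩ := hRne
        have : 0 < m := j.pos
        exact_mod_cast this
      have hmax : max 1 (R.card : ℝ) = R.card := by
        apply max_eq_right
        exact_mod_cast Finset.card_pos.mpr hRne
      -- key: for j ∈ R, L j ω * (m/(α |R|)) ≤ w j * (L j ω * Eg j ω)
      have key : ∀ j ∈ R, L j ω * ((m : ℝ) / (α * R.card)) ≤ w j * (L j ω * Eg j ω) := by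
        intro j hj
        have := hR j hj
        calc L j ω * ((m : ℝ) / (α * R.card)) ≤ L j ω * (w j * Eg j ω) :=
              mul_le_mul_of_nonneg_left this (hL j ω).1
          _ = w j * (L j ω * Eg j ω) := by ring
      have hsum : (∑ j ∈ R, L j ω) * ((m : ℝ) / (α * R.card))
          ≤ ∑ j, w j * (L j ω * Eg j ω) := by
        rw [Finset.sum_mul]
        calc ∑ j ∈ R, L j ω * ((m : ℝ) / (α * R.card))
            ≤ ∑ j ∈ R, w j * (L j ω * Eg j ω) := Finset.sum_le_sum key
          _ ≤ ∑ j, w j * (L j ω * Eg j ω) :=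
              Finset.sum_le_sum_of_subset_of_nonneg (Finset.subset_univ R)
                (fun j _ _ => hterm j ω)
      have h1 : (∑ j ∈ R, L j ω) / (R.card : ℝ) / α
          = (∑ j ∈ R, L j ω) * ((m : ℝ) / (α * R.card)) / m := by
        field_simp
      rw [hmax, h1, one_div, inv_mul_eq_div]
      gcongr
  · constructor
    · have hint : Integrable (fun ω => ∑ j, w j * (L j ω * Eg j ω)) μ :=
        integrable_finset_sum _ fun j _ => (hInt j).const_mul (w j)
      rw [integral_const_mul, integral_finset_sum _ fun j _ => (hInt j).const_mul (w j)]
      apply mul_le_mul_of_nonneg_left _ (by positivity)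
      apply Finset.sum_le_sum
      intro j _
      rw [integral_const_mul]
      calc w j * ∫ ω, L j ω * Eg j ω ∂μ ≤ w j * 1 :=
            mul_le_mul_of_nonneg_left (hrisk j) (hw j)
        _ = w j := mul_one _
    · rcases Nat.eq_zero_or_pos m with rfl | hm
      · simp
      · have hm' : (0 : ℝ) < m := by exact_mod_cast hm
        rw [one_div, inv_mul_le_iff₀ hm']
        simpa using hbudget
end

section
/- Fixed-level FDR control of conformal e-BH selection. Assume the combined calibration and test pairs D_cal ∪ D_test are exchangeable and the score S(X,Y) ≥ 0 is monotone non-increasing in Y. Fix α ∈ (0,1) and thresholds c_1,…,c_m, compute the conformal e-variables E_j = Ŝ_{n+j}/((1/(n+1))(Σ_{i=1}^n S_i + Ŝ_{n+j})), and let R(α) be the e-BH set at level α (the self-consistent set with |R(α)| = max{k : E_(k) ≥ m/(αk)}). Then E[ FDP(R(α), Y^{test}) ] ≤ α, i.e., the false discovery rate of the conformal e-BH selection is at most α. -/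
/-!
STATEMENT 13: Fixed-level FDR control of conformal e-BH selection.

The combined pairs `(X i, Y i)`, `i : Fin (n + m)`, are exchangeable
(calibration indices `Fin.castAdd m i`, test indices `Fin.natAdd n j`).  The
conformal e-variables are computed from a nonnegative score monotone
non-increasing in the response, and the e-BH set at level `α` is the
self-consistent set of size `k(α) = max {k : E_(k) ≥ m/(αk)}`.
-/

open MeasureTheory ProbabilityTheory

/-- the `k`-th largest value, `E_(k)`, for `1 ≤ k ≤ m`. -/
noncomputable def kthLargest (m : ℕ) (E : Fin m → ℝ) (k : ℕ) : ℝ :=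
  (sortedVals m E).getD (m - k) 0

/-- e-BH index `k(α) = max {k ∈ {1,…,m} : E_(k) ≥ m/(αk)}` (`0` if empty). -/
noncomputable def ebhIndex (m : ℕ) (α : ℝ) (E : Fin m → ℝ) : ℕ :=
  sSup {k | 1 ≤ k ∧ k ≤ m ∧ (m : ℝ) / (α * k) ≤ kthLargest m E k}

/-- e-BH rejection set `{j : E j ≥ m/(α k(α))}` if `k(α) > 0`, else `∅`. -/
noncomputable def ebhSet (m : ℕ) (α : ℝ) (E : Fin m → ℝ) : Finset (Fin m) :=
  if ebhIndex m α E = 0 then ∅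
  else Finset.univ.filter fun j => (m : ℝ) / (α * ebhIndex m α E) ≤ E j

/-- conformal e-variable `E_j = Ŝ_{n+j} / ((1/(n+1)) (Σ_i S_i + Ŝ_{n+j}))`. -/
noncomputable def conformalE {𝓧 : Type*} (n m : ℕ) (S : 𝓧 → ℝ → ℝ)
    (X : Fin (n + m) → 𝓧) (Y : Fin (n + m) → ℝ) (c : Fin m → ℝ) (j : Fin m) : ℝ :=
  S (X (Fin.natAdd n j)) (c j) /
    ((1 / (n + 1 : ℝ)) *
      (∑ i : Fin n, S (X (Fin.castAdd m i)) (Y (Fin.castAdd m i))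
        + S (X (Fin.natAdd n j)) (c j)))

lemma card_ge_of_kthLargest (m : ℕ) (E : Fin m → ℝ) (k : ℕ) (hk1 : 1 ≤ k) (hkm : k ≤ m) :
    k ≤ (Finset.univ.filter fun j => kthLargest m E k ≤ E j).card := by
  classical
  set l := sortedVals m E with hl
  have hlen : l.length = m := by
    simp [hl, sortedVals, Multiset.length_sort]
  have hmk : m - k < l.length := by omega
  have ht : kthLargest m E k = l.get ⟨m - k, hmk⟩ := by
    rw [kthLargest, ← hl, List.getD_eq_getElem l 0 hmk, List.get_eq_getElem]
  set t := kthLargest m E k with htdef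
  have hs : l.Pairwise (· ≤ ·) := Multiset.pairwise_sort _ _
  have hdrop : ∀ a ∈ l.drop (m - k), t ≤ a := by
    intro a ha
    obtain ⟨i, hi⟩ := List.get_of_mem ha
    have hlt : (m - k) + (i : ℕ) < l.length := by
      have := i.isLt
      simp [List.length_drop] at this
      omega
    have : a = l.get ⟨(m - k) + i, hlt⟩ := by
      rw [← hi]; simp
    rw [this, ht]
    exact hs.rel_get_of_le (by simp [Fin.le_def])
  have hcount : k ≤ l.countP (fun x => decide (t ≤ x)) := by
    have h1 : (l.drop (m - k)).countP (fun x => decide (t ≤ x)) = (l.drop (m - k)).length := by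
      rw [List.countP_eq_length]
      intro a ha
      simpa using hdrop a ha
    have h2 : (l.drop (m - k)).length = k := by
      simp [List.length_drop, hlen]; omega
    calc k = (l.drop (m - k)).countP (fun x => decide (t ≤ x)) := by rw [h1, h2]
      _ ≤ l.countP (fun x => decide (t ≤ x)) := by
          conv_rhs => rw [← List.take_append_drop (m - k) l]
          rw [List.countP_append]; omega
  have hcard : (Finset.univ.filter fun j => t ≤ E j).card
      = Multiset.countP (fun x => t ≤ x) (Multiset.map E Finset.univ.val) := by
    rw [Multiset.countP_map]
    rfl
  have hml : Multiset.countP (fun x => t ≤ x) (Multiset.map E Finset.univ.val)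
      = l.countP (fun x => decide (t ≤ x)) := by
    rw [← Multiset.sort_eq (Multiset.map E Finset.univ.val) (· ≤ ·), Multiset.coe_countP]
    rfl
  omega


lemma fdp_ebh_le (m : ℕ) (α : ℝ) (hα : 0 < α) (E : Fin m → ℝ) (hE : ∀ j, 0 ≤ E j)
    (null : Fin m → Prop) [DecidablePred null] :
    fdp m (ebhSet m α E) null ≤ (α / m) * ∑ j, (if null j then E j else 0) := by
  classical
  have hsum_nonneg : 0 ≤ ∑ j, (if null j then E j else 0) :=
    Finset.sum_nonneg fun j _ => by by_cases h : null j <;> simp [h, hE j]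
  by_cases hk0 : ebhIndex m α E = 0
  · rw [ebhSet, if_pos hk0]
    simp only [fdp, Finset.filter_empty, Finset.card_empty, Nat.cast_zero, zero_div]
    positivity
  · have hne : {k | 1 ≤ k ∧ k ≤ m ∧ (m : ℝ) / (α * k) ≤ kthLargest m E k}.Nonempty := by
      by_contra h
      rw [Set.not_nonempty_iff_eq_empty] at h
      apply hk0
      rw [ebhIndex, h]
      exact csSup_empty
    set k := ebhIndex m α E with hk
    have hkmem : k ∈ {k | 1 ≤ k ∧ k ≤ m ∧ (m : ℝ) / (α * k) ≤ kthLargest m E k} :=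
      Nat.sSup_mem hne ⟨m, fun x hx => hx.2.1⟩
    obtain ⟨hk1, hkm, hkth⟩ := hkmem
    set R := ebhSet m α E with hR
    have hRdef : R = Finset.univ.filter fun j => (m : ℝ) / (α * k) ≤ E j := by
      rw [hR, ebhSet, if_neg hk0]
    have hcardk : k ≤ R.card := by
      refine le_trans (card_ge_of_kthLargest m E k hk1 hkm) ?_
      rw [hRdef]
      apply Finset.card_le_card
      intro j hj
      simp only [Finset.mem_filter] at *
      exact ⟨hj.1, le_trans hkth hj.2⟩
    have hR1 : 1 ≤ R.card := le_trans hk1 hcardk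
    have hkpos : (0:ℝ) < k := by exact_mod_cast hk1
    have hRpos : (0:ℝ) < R.card := by exact_mod_cast hR1
    have hjR : ∀ j ∈ R, (m : ℝ) / (α * R.card) ≤ E j := by
      intro j hj
      rw [hRdef] at hj
      rw [Finset.mem_filter] at hj
      refine le_trans ?_ hj.2
      apply div_le_div_of_nonneg_left (by positivity) (by positivity)
      have : (k:ℝ) ≤ R.card := by exact_mod_cast hcardk
      nlinarith
    set Rn := R.filter null with hRn
    have h1 : (Rn.card : ℝ) * ((m:ℝ)/(α*R.card)) ≤ ∑ j ∈ Rn, E j := by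
      have := Finset.card_nsmul_le_sum Rn E ((m:ℝ)/(α*R.card))
        (fun j hj => hjR j (Finset.mem_filter.mp hj).1)
      simpa [nsmul_eq_mul] using this
    have h2 : ∑ j ∈ Rn, E j ≤ ∑ j, (if null j then E j else 0) := by
      rw [← Finset.sum_filter]
      apply Finset.sum_le_sum_of_subset_of_nonneg
      · exact Finset.filter_subset_filter null (Finset.subset_univ R)
      · intro j _ _
        exact hE j
    have hm1 : 1 ≤ m := le_trans hk1 hkm
    have hm0 : (0:ℝ) < m := by exact_mod_cast hm1
    have hfdp : fdp m R null = (Rn.card : ℝ) / R.card := by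
      rw [fdp]
      congr 1
      rw [max_eq_right]
      exact_mod_cast hR1
    rw [hfdp]
    calc (Rn.card:ℝ)/R.card
        = (α/m) * ((Rn.card:ℝ) * ((m:ℝ)/(α*R.card))) := by
          field_simp
      _ ≤ (α/m) * ∑ j, (if null j then E j else 0) := by
          apply mul_le_mul_of_nonneg_left (le_trans h1 h2) (by positivity)

lemma conf_ratio_le (nn : ℝ) (hnn : 0 < nn) (Sh A Tj : ℝ)
    (h1 : 0 ≤ Sh) (h2 : Sh ≤ Tj) (h3 : 0 ≤ A) :
    Sh / ((1/nn) * (A + Sh)) ≤ nn * (Tj / (A + Tj)) := by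
  have hTj : 0 ≤ Tj := le_trans h1 h2
  rcases eq_or_lt_of_le (by positivity : (0:ℝ) ≤ A + Sh) with h0 | h0
  · rw [← h0, mul_zero, div_zero]
    positivity
  · have hATj : 0 < A + Tj := by linarith
    have hL : Sh / ((1/nn) * (A + Sh)) = nn * (Sh / (A + Sh)) := by
      field_simp
    rw [hL]
    apply mul_le_mul_of_nonneg_left _ (le_of_lt hnn)
    rw [div_le_div_iff₀ h0 hATj]
    nlinarith

lemma exch_ratio_int_le
    {Ω 𝓧 : Type*} [MeasurableSpace Ω] [MeasurableSpace 𝓧]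
    (μ : Measure Ω) [IsProbabilityMeasure μ]
    (N r : ℕ) (X : Fin N → Ω → 𝓧) (Y : Fin N → Ω → ℝ)
    (hX : ∀ i, Measurable (X i)) (hY : ∀ i, Measurable (Y i))
    (hexch : ∀ σ : Equiv.Perm (Fin N),
      Measure.map (fun ω => fun i => (X (σ i) ω, Y (σ i) ω)) μ
        = Measure.map (fun ω => fun i => (X i ω, Y i ω)) μ)
    (S : 𝓧 → ℝ → ℝ) (hSmeas : Measurable fun p : 𝓧 × ℝ => S p.1 p.2)
    (hS_nonneg : ∀ x y, 0 ≤ S x y)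
    (ι : Fin (r+1) → Fin N) (hι : Function.Injective ι) (k : Fin (r+1)) :
    ∫ ω, S (X (ι k) ω) (Y (ι k) ω) / ∑ k', S (X (ι k') ω) (Y (ι k') ω) ∂μ
      ≤ 1/((r:ℝ)+1) := by
  classical
  set g : Fin (r+1) → Ω → ℝ :=
    fun a ω => S (X (ι a) ω) (Y (ι a) ω) / ∑ k', S (X (ι k') ω) (Y (ι k') ω) with hg
  have hgmeas : ∀ a, Measurable (g a) := by
    intro a
    apply Measurable.div
    · exact hSmeas.comp ((hX _).prodMk (hY _))
    · exact Finset.measurable_sum _ fun k' _ => hSmeas.comp ((hX _).prodMk (hY _))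
  have hgnonneg : ∀ a ω, 0 ≤ g a ω := by
    intro a ω
    apply div_nonneg (hS_nonneg _ _)
    exact Finset.sum_nonneg fun k' _ => hS_nonneg _ _
  have hgle1 : ∀ a ω, g a ω ≤ 1 := by
    intro a ω
    rcases eq_or_lt_of_le
        (Finset.sum_nonneg (fun k' (_ : k' ∈ Finset.univ) =>
          hS_nonneg (X (ι k') ω) (Y (ι k') ω))) with h0 | h0
    · rw [hg]
      simp only [← h0, div_zero]
      exact zero_le_one
    · rw [hg]
      simp only
      rw [div_le_one h0]
      exact Finset.single_le_sum (f := fun k' => S (X (ι k') ω) (Y (ι k') ω))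
        (fun k' _ => hS_nonneg _ _) (Finset.mem_univ a)
  have hgint : ∀ a, Integrable (g a) μ := by
    intro a
    refine (integrable_const (1:ℝ)).mono' (hgmeas a).aestronglyMeasurable ?_
    exact ae_of_all μ fun ω => by
      rw [Real.norm_eq_abs, abs_of_nonneg (hgnonneg a ω)]
      exact hgle1 a ω
  have hgsum : ∀ ω, ∑ a, g a ω ≤ 1 := by
    intro ω
    rcases eq_or_lt_of_le
        (Finset.sum_nonneg (fun k' (_ : k' ∈ Finset.univ) =>
          hS_nonneg (X (ι k') ω) (Y (ι k') ω))) with h0 | h0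
    · rw [hg]
      simp only [← h0, div_zero, Finset.sum_const_zero]
      exact zero_le_one
    · rw [hg]
      simp only
      rw [← Finset.sum_div, div_le_one h0]
  have hgeq : ∀ a b, ∫ ω, g a ω ∂μ = ∫ ω, g b ω ∂μ := by
    intro a b
    set σ : Equiv.Perm (Fin N) := Equiv.swap (ι a) (ι b) with hσ
    set Φ : (Fin N → 𝓧 × ℝ) → ℝ := fun v =>
      S (v (ι b)).1 (v (ι b)).2 / ∑ k', S (v (ι k')).1 (v (ι k')).2 with hΦ
    have hΦmeas : Measurable Φ := by
      apply Measurable.div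
      · exact hSmeas.comp (measurable_pi_apply _)
      · exact Finset.measurable_sum _ fun k' _ => hSmeas.comp (measurable_pi_apply _)
    have hmap : ∀ τ : Equiv.Perm (Fin N),
        Measurable (fun ω => fun i => (X (τ i) ω, Y (τ i) ω)) :=
      fun τ => measurable_pi_lambda _ fun i => (hX (τ i)).prodMk (hY (τ i))
    have hmapid : Measurable (fun ω => fun i : Fin N => (X i ω, Y i ω)) :=
      measurable_pi_lambda _ fun i => (hX i).prodMk (hY i)
    have h1 : ∫ v, Φ v ∂(Measure.map (fun ω => fun i => (X i ω, Y i ω)) μ)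
        = ∫ ω, g b ω ∂μ := by
      rw [integral_map hmapid.aemeasurable hΦmeas.aestronglyMeasurable]
    have h2 : ∫ v, Φ v ∂(Measure.map (fun ω => fun i => (X (σ i) ω, Y (σ i) ω)) μ)
        = ∫ ω, g a ω ∂μ := by
      rw [integral_map (hmap σ).aemeasurable hΦmeas.aestronglyMeasurable]
      congr 1
      funext ω
      show S (X (σ (ι b)) ω) (Y (σ (ι b)) ω)
            / ∑ k', S (X (σ (ι k')) ω) (Y (σ (ι k')) ω) = g a ω
      have hb : σ (ι b) = ι a := Equiv.swap_apply_right _ _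
      have hk' : ∀ k' : Fin (r+1), σ (ι k') = ι (Equiv.swap a b k') := fun k' =>
        hι.swap_apply a b k'
      rw [hb]
      have hsum : ∑ k', S (X (σ (ι k')) ω) (Y (σ (ι k')) ω)
          = ∑ k', S (X (ι k') ω) (Y (ι k') ω) := by
        rw [Finset.sum_congr rfl fun k' _ => by rw [hk' k']]
        exact Equiv.sum_comp (Equiv.swap a b) fun k' => S (X (ι k') ω) (Y (ι k') ω)
      rw [hsum]
    rw [← h2, hexch σ, h1]
  have hsum_int : ∑ a, ∫ ω, g a ω ∂μ ≤ 1 := by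
    rw [← integral_finset_sum _ fun a _ => hgint a]
    calc ∫ ω, ∑ a, g a ω ∂μ ≤ ∫ _ω, (1:ℝ) ∂μ :=
          integral_mono (integrable_finset_sum _ fun a _ => hgint a)
            (integrable_const 1) hgsum
      _ = 1 := by simp
  have hconst : ∑ a, ∫ ω, g a ω ∂μ = ((r:ℝ)+1) * ∫ ω, g k ω ∂μ := by
    rw [Finset.sum_congr rfl fun a _ => hgeq a k]
    simp [Finset.sum_const, nsmul_eq_mul]
  rw [hconst] at hsum_int
  have hr : (0:ℝ) < (r:ℝ)+1 := by positivity
  rw [le_div_iff₀ hr]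
  linarith

lemma ratio_integrable
    {Ω 𝓧 : Type*} [MeasurableSpace Ω] [MeasurableSpace 𝓧]
    (μ : Measure Ω) [IsProbabilityMeasure μ]
    (N r : ℕ) (X : Fin N → Ω → 𝓧) (Y : Fin N → Ω → ℝ)
    (hX : ∀ i, Measurable (X i)) (hY : ∀ i, Measurable (Y i))
    (S : 𝓧 → ℝ → ℝ) (hSmeas : Measurable fun p : 𝓧 × ℝ => S p.1 p.2)
    (hS_nonneg : ∀ x y, 0 ≤ S x y)
    (ι : Fin (r+1) → Fin N) (k : Fin (r+1)) :
    Integrable (fun ω =>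
      S (X (ι k) ω) (Y (ι k) ω) / ∑ k', S (X (ι k') ω) (Y (ι k') ω)) μ := by
  have hmeas : Measurable (fun ω =>
      S (X (ι k) ω) (Y (ι k) ω) / ∑ k', S (X (ι k') ω) (Y (ι k') ω)) := by
    apply Measurable.div
    · exact hSmeas.comp ((hX _).prodMk (hY _))
    · exact Finset.measurable_sum _ fun k' _ => hSmeas.comp ((hX _).prodMk (hY _))
  refine (integrable_const (1:ℝ)).mono' hmeas.aestronglyMeasurable (ae_of_all μ fun ω => ?_)
  have hnn : 0 ≤ S (X (ι k) ω) (Y (ι k) ω) / ∑ k', S (X (ι k') ω) (Y (ι k') ω) :=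
    div_nonneg (hS_nonneg _ _) (Finset.sum_nonneg fun k' _ => hS_nonneg _ _)
  rw [Real.norm_eq_abs, abs_of_nonneg hnn]
  rcases eq_or_lt_of_le
      (Finset.sum_nonneg (fun k' (_ : k' ∈ Finset.univ) =>
        hS_nonneg (X (ι k') ω) (Y (ι k') ω))) with h0 | h0
  · rw [← h0, div_zero]
    exact zero_le_one
  · rw [div_le_one h0]
    exact Finset.single_le_sum (f := fun k' => S (X (ι k') ω) (Y (ι k') ω))
      (fun k' _ => hS_nonneg _ _) (Finset.mem_univ k)

noncomputable def iotaIdx (n m : ℕ) (j : Fin m) : Fin (n+1) → Fin (n+m) :=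
  Fin.snoc (fun i => Fin.castAdd m i) (Fin.natAdd n j)

lemma iotaIdx_last (n m : ℕ) (j : Fin m) : iotaIdx n m j (Fin.last n) = Fin.natAdd n j := by
  simp [iotaIdx]

lemma iotaIdx_inj (n m : ℕ) (j : Fin m) : Function.Injective (iotaIdx n m j) := by
  intro a b hab
  have hval : ∀ k : Fin (n+1), ((iotaIdx n m j k : Fin (n+m)) : ℕ)
      = if (k:ℕ) < n then (k:ℕ) else n + j := by
    intro k
    refine Fin.lastCases ?_ ?_ k
    · simp [iotaIdx]
    · intro i
      simp [iotaIdx, i.isLt]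
  have h1 := hval a
  have h2 := hval b
  rw [hab] at h1
  have h3 := h1.symm.trans h2
  have ha := a.isLt
  have hb := b.isLt
  apply Fin.ext
  by_cases hc : (a:ℕ) < n <;> by_cases hd : (b:ℕ) < n <;> simp [hc, hd] at h3 <;> omega

lemma iotaIdx_sum (n m : ℕ) (j : Fin m) (f : Fin (n+m) → ℝ) :
    ∑ k, f (iotaIdx n m j k)
      = (∑ i : Fin n, f (Fin.castAdd m i)) + f (Fin.natAdd n j) := by
  rw [Fin.sum_univ_castSucc]
  simp [iotaIdx]

theorem conformal_ebh_fdr_control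
    {Ω 𝓧 : Type*} [MeasurableSpace Ω] [MeasurableSpace 𝓧]
    (μ : Measure Ω) [IsProbabilityMeasure μ]
    (n m : ℕ)
    (X : Fin (n + m) → Ω → 𝓧) (Y : Fin (n + m) → Ω → ℝ)
    (hX : ∀ i, Measurable (X i)) (hY : ∀ i, Measurable (Y i))
    -- exchangeability of the combined calibration and test pairs
    (hexch : ∀ σ : Equiv.Perm (Fin (n + m)),
      Measure.map (fun ω => fun i => (X (σ i) ω, Y (σ i) ω)) μ
        = Measure.map (fun ω => fun i => (X i ω, Y i ω)) μ)
    -- nonnegative score, monotone non-increasing in the response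
    (S : 𝓧 → ℝ → ℝ) (hSmeas : Measurable fun p : 𝓧 × ℝ => S p.1 p.2)
    (hS_nonneg : ∀ x y, 0 ≤ S x y)
    (hS_mono : ∀ x y y', y ≤ y' → S x y' ≤ S x y)
    -- fixed thresholds and level
    (c : Fin m → ℝ) (α : ℝ) (hα : α ∈ Set.Ioo (0 : ℝ) 1) :
    -- FDR of the conformal e-BH selection is at most α
    ∫ ω,
        fdp m
          (ebhSet m α (conformalE n m S (fun i => X i ω) (fun i => Y i ω) c))
          (fun j => Y (Fin.natAdd n j) ω ≤ c j) ∂μ ≤ α := by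
  classical
  obtain ⟨hα0, hα1⟩ := hα
  set ratio : Fin m → Ω → ℝ := fun j ω =>
    S (X (iotaIdx n m j (Fin.last n)) ω) (Y (iotaIdx n m j (Fin.last n)) ω) /
      ∑ k', S (X (iotaIdx n m j k') ω) (Y (iotaIdx n m j k') ω) with hratio
  have hFint : ∀ j, Integrable (ratio j) μ := fun j =>
    ratio_integrable μ (n+m) n X Y hX hY S hSmeas hS_nonneg (iotaIdx n m j) (Fin.last n)
  have hBj : ∀ j, ∫ ω, ratio j ω ∂μ ≤ 1/((n:ℝ)+1) := fun j =>
    exch_ratio_int_le μ (n+m) n X Y hX hY hexch S hSmeas hS_nonneg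
      (iotaIdx n m j) (iotaIdx_inj n m j) (Fin.last n)
  have hrationn : ∀ j ω, 0 ≤ ratio j ω := fun j ω =>
    div_nonneg (hS_nonneg _ _) (Finset.sum_nonneg fun k' _ => hS_nonneg _ _)
  have hEnn : ∀ ω j, 0 ≤ conformalE n m S (fun i => X i ω) (fun i => Y i ω) c j := by
    intro ω j
    apply div_nonneg (hS_nonneg _ _)
    apply mul_nonneg (by positivity)
    have := Finset.sum_nonneg
      (fun i (_ : i ∈ (Finset.univ : Finset (Fin n))) =>
        hS_nonneg (X (Fin.castAdd m i) ω) (Y (Fin.castAdd m i) ω))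
    have h2 := hS_nonneg (X (Fin.natAdd n j) ω) (c j)
    exact add_nonneg this h2
  -- pointwise comparison of truncated e-value with the exchangeable ratio
  have hpt2 : ∀ ω (j : Fin m),
      (if Y (Fin.natAdd n j) ω ≤ c j
        then conformalE n m S (fun i => X i ω) (fun i => Y i ω) c j else 0)
      ≤ ((n:ℝ)+1) * ratio j ω := by
    intro ω j
    have hRHS : ((n:ℝ)+1) * ratio j ω
        = ((n:ℝ)+1) * (S (X (Fin.natAdd n j) ω) (Y (Fin.natAdd n j) ω) /
            ((∑ i : Fin n, S (X (Fin.castAdd m i) ω) (Y (Fin.castAdd m i) ω))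
              + S (X (Fin.natAdd n j) ω) (Y (Fin.natAdd n j) ω))) := by
      rw [hratio]
      simp only [iotaIdx_last]
      congr 2
      exact iotaIdx_sum n m j (fun i => S (X i ω) (Y i ω))
    rw [hRHS]
    by_cases hnull : Y (Fin.natAdd n j) ω ≤ c j
    · rw [if_pos hnull]
      show S (X (Fin.natAdd n j) ω) (c j) /
          ((1/((n:ℝ)+1)) *
            ((∑ i : Fin n, S (X (Fin.castAdd m i) ω) (Y (Fin.castAdd m i) ω))
              + S (X (Fin.natAdd n j) ω) (c j))) ≤ _
      exact conf_ratio_le ((n:ℝ)+1) (by positivity) _ _ _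
        (hS_nonneg _ _) (hS_mono _ _ _ hnull)
        (Finset.sum_nonneg fun i _ => hS_nonneg _ _)
    · rw [if_neg hnull]
      apply mul_nonneg (by positivity)
      apply div_nonneg (hS_nonneg _ _)
      exact add_nonneg (Finset.sum_nonneg fun i _ => hS_nonneg _ _) (hS_nonneg _ _)
  -- pointwise FDP bound
  have hpt : ∀ ω,
      fdp m (ebhSet m α (conformalE n m S (fun i => X i ω) (fun i => Y i ω) c))
        (fun j => Y (Fin.natAdd n j) ω ≤ c j)
      ≤ (α/(m:ℝ)) * ∑ j, ((n:ℝ)+1) * ratio j ω := by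
    intro ω
    refine le_trans (fdp_ebh_le m α hα0 _ (fun j => hEnn ω j) _) ?_
    apply mul_le_mul_of_nonneg_left _ (by positivity)
    exact Finset.sum_le_sum fun j _ => hpt2 ω j
  have hfdpnn : ∀ ω, 0 ≤
      fdp m (ebhSet m α (conformalE n m S (fun i => X i ω) (fun i => Y i ω) c))
        (fun j => Y (Fin.natAdd n j) ω ≤ c j) := fun ω =>
    div_nonneg (Nat.cast_nonneg _) (le_trans zero_le_one (le_max_left _ _))
  have hint : Integrable (fun ω => (α/(m:ℝ)) * ∑ j, ((n:ℝ)+1) * ratio j ω) μ :=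
    ((integrable_finset_sum _ fun j _ => (hFint j).const_mul _).const_mul _)
  have hmono := integral_mono_of_nonneg (ae_of_all μ hfdpnn) hint (ae_of_all μ hpt)
  refine le_trans hmono ?_
  have hsplit : ∫ ω, (α/(m:ℝ)) * ∑ j, ((n:ℝ)+1) * ratio j ω ∂μ
      = (α/(m:ℝ)) * ∑ j, ((n:ℝ)+1) * ∫ ω, ratio j ω ∂μ := by
    rw [integral_const_mul, integral_finset_sum _ fun j _ => (hFint j).const_mul _]
    congr 1
    exact Finset.sum_congr rfl fun j _ => integral_const_mul _ _
  rw [hsplit]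
  have hsum_le : ∑ j, ((n:ℝ)+1) * ∫ ω, ratio j ω ∂μ ≤ (m:ℝ) := by
    calc ∑ j, ((n:ℝ)+1) * ∫ ω, ratio j ω ∂μ ≤ ∑ _j : Fin m, (1:ℝ) := by
          apply Finset.sum_le_sum
          intro j _
          calc ((n:ℝ)+1) * ∫ ω, ratio j ω ∂μ
              ≤ ((n:ℝ)+1) * (1/((n:ℝ)+1)) :=
                mul_le_mul_of_nonneg_left (hBj j) (by positivity)
            _ = 1 := by field_simp
      _ = (m:ℝ) := by simp
  rcases Nat.eq_zero_or_pos m with hm | hm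
  · subst hm
    simp
    positivity
  · have hm0 : (0:ℝ) < m := by exact_mod_cast hm
    calc (α/(m:ℝ)) * ∑ j, ((n:ℝ)+1) * ∫ ω, ratio j ω ∂μ
        ≤ (α/(m:ℝ)) * (m:ℝ) := mul_le_mul_of_nonneg_left hsum_le (by positivity)
      _ = α := by field_simp
end
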